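/- arXiv:1906.00288 — 13 statements merged into one kernel-verified Lean document; each statement's English description precedes it below -/
import Mathlib

section
/- With the definitions in the context (in particular P ≥ 1, so that T ≥ 1 and C ≥ 1), the pair-clustered variance estimator of the difference-in-means estimator satisfies V̂_pair(τ̂) = Σ_{p=1}^P (SET_p/T − SEU_p/C)². -/
open Finset

/-! Since `W - W̄ = (1 - W̄) W - W̄ (1 - W)`, the pair score `Σ_{g,i} (W_{gp} - W̄) ε_{igp}` equals
`(1 - W̄) SET_p - W̄ SEU_p = (C SET_p - T SEU_p) / n`, and for binary `W` the denominator
`Σ (W_{gp} - W̄)²` equals `(1 - W̄)² T + W̄² C = T C / n`. Dividing the score by it gives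
`SET_p / T - SEU_p / C`. -/

lemma sq_sub_eq_of_binary {W : ℝ} (hW : W = 0 ∨ W = 1) (w : ℝ) :
    (W - w) ^ 2 = (1 - w) ^ 2 * W + w ^ 2 * (1 - W) := by
  rcases hW with rfl | rfl <;> ring

lemma contrast_div_eq {T C : ℝ} (hT : T ≠ 0) (hC : C ≠ 0) (hTC : T + C ≠ 0) (a b : ℝ) :
    ((1 - T / (T + C)) * a - T / (T + C) * b)
      / ((1 - T / (T + C)) ^ 2 * T + (T / (T + C)) ^ 2 * C) = a / T - b / C := by
  have hw : 1 - T / (T + C) = C / (T + C) := by field_simp; ring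
  have hden : (C / (T + C)) ^ 2 * T + (T / (T + C)) ^ 2 * C = T * C / (T + C) := by
    field_simp; ring
  rw [hw, hden, div_sub_div _ _ hT hC]
  field_simp

lemma sum_sum_sub_mul_eq {ι κ : Type*} [Fintype κ] (n : ι → κ → ℕ) (p : ι) (W : ι → κ → ℝ)
    (ε : (p : ι) → (g : κ) → Fin (n p g) → ℝ) (w : ℝ) :
    ∑ g, ∑ i : Fin (n p g), (W p g - w) * ε p g i
      = (1 - w) * ∑ g, ∑ i : Fin (n p g), W p g * ε p g i
        - w * ∑ g, ∑ i : Fin (n p g), (1 - W p g) * ε p g i := by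
  simp only [mul_sum, ← sum_sub_distrib]
  exact sum_congr rfl fun g _ => sum_congr rfl fun i _ => by ring

section PairedDesign

variable {ι κ : Type*} [Fintype ι] [Fintype κ] (n : ι → κ → ℕ)

lemma card_le_sum_sum_mul (hn : ∀ p g, 1 ≤ n p g) {V : ι → κ → ℝ} (hV : ∀ p g, 0 ≤ V p g)
    (hV1 : ∀ p, ∑ g, V p g = 1) :
    (Fintype.card ι : ℝ) ≤ ∑ p, ∑ g, (n p g : ℝ) * V p g :=
  calc (Fintype.card ι : ℝ) = ∑ p, ∑ g, V p g := by simp [hV1]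
    _ ≤ _ := sum_le_sum fun p _ => sum_le_sum fun g _ =>
      le_mul_of_one_le_left (hV p g) (by exact_mod_cast hn p g)

lemma sum_sum_sum_sq_sub_eq_of_binary {W : ι → κ → ℝ} (hW : ∀ p g, W p g = 0 ∨ W p g = 1)
    (w : ℝ) :
    ∑ p, ∑ g, ∑ _i : Fin (n p g), (W p g - w) ^ 2
      = (1 - w) ^ 2 * ∑ p, ∑ g, (n p g : ℝ) * W p g
        + w ^ 2 * ∑ p, ∑ g, (n p g : ℝ) * (1 - W p g) := by
  simp only [sum_const, card_univ, Fintype.card_fin, nsmul_eq_mul, sq_sub_eq_of_binary (hW _ _),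
    mul_sum, ← sum_add_distrib]
  exact sum_congr rfl fun p _ => sum_congr rfl fun g _ => by ring

end PairedDesign

theorem pair_clustered_variance_estimator_no_fe_general
    (P : ℕ) (hP : 1 ≤ P)
    (n : Fin P → Fin 2 → ℕ) (hn : ∀ p g, 1 ≤ n p g)
    (W : Fin P → Fin 2 → ℝ)
    (hW01 : ∀ p g, W p g = 0 ∨ W p g = 1)
    (hWpair : ∀ p, W p 0 + W p 1 = 1)
    (N T C Wbar : ℝ)
    (hN : N = ∑ p : Fin P, ∑ g : Fin 2, (n p g : ℝ))
    (hT : T = ∑ p : Fin P, ∑ g : Fin 2, (n p g : ℝ) * W p g)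
    (hC : C = ∑ p : Fin P, ∑ g : Fin 2, (n p g : ℝ) * (1 - W p g))
    (hWbar : Wbar = T / N)
    (ε : (p : Fin P) → (g : Fin 2) → Fin (n p g) → ℝ)
    (SET SEU : Fin P → ℝ)
    (hSET : ∀ p, SET p = ∑ g : Fin 2, ∑ i : Fin (n p g), W p g * ε p g i)
    (hSEU : ∀ p, SEU p = ∑ g : Fin 2, ∑ i : Fin (n p g), (1 - W p g) * ε p g i)
    (Vpair : ℝ)
    (hVpair : Vpair = (∑ p : Fin P, (∑ g : Fin 2, ∑ i : Fin (n p g), (W p g - Wbar) * ε p g i) ^ 2)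
        / (∑ p : Fin P, ∑ g : Fin 2, ∑ i : Fin (n p g), (W p g - Wbar) ^ 2) ^ 2) :
    Vpair = ∑ p : Fin P, (SET p / T - SEU p / C) ^ 2 := by
  have hP' : (1 : ℝ) ≤ P := by exact_mod_cast hP
  have hPT : (P : ℝ) ≤ T := by
    simpa [hT] using card_le_sum_sum_mul n hn
      (fun p g => by rcases hW01 p g with h | h <;> simp [h])
      fun p => by simpa [Fin.sum_univ_two] using hWpair p
  have hPC : (P : ℝ) ≤ C := by
    simpa [hC] using card_le_sum_sum_mul n hn (V := fun p g => 1 - W p g)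
      (fun p g => by rcases hW01 p g with h | h <;> simp [h])
      (fun p => by simp only [Fin.sum_univ_two]; linarith [hWpair p])
  have hNTC : N = T + C := by
    simp only [hN, hT, hC, ← sum_add_distrib, ← mul_add, add_sub_cancel, mul_one]
  rw [hVpair, sum_sum_sum_sq_sub_eq_of_binary n hW01, ← hT, ← hC, sum_div]
  refine sum_congr rfl fun p _ => ?_
  rw [← div_pow, sum_sum_sub_mul_eq, ← hSET, ← hSEU, hWbar, hNTC,
    contrast_div_eq (by linarith) (by linarith) (by linarith)]

/-- In a paired experiment with `P ≥ 1` pairs, two units per pair (one treated per pair),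
`n p g ≥ 1` observations in unit `g` of pair `p`, the pair-clustered variance estimator of
the difference-in-means estimator satisfies
`V̂_pair(τ̂) = Σ_p (SET_p / T - SEU_p / C)²`. -/
theorem pair_clustered_variance_estimator_no_fe
    (P : ℕ) (hP : 1 ≤ P)
    (n : Fin P → Fin 2 → ℕ) (hn : ∀ p g, 1 ≤ n p g)
    (W : Fin P → Fin 2 → ℝ)
    (hW01 : ∀ p g, W p g = 0 ∨ W p g = 1)
    (hWpair : ∀ p, W p 0 + W p 1 = 1)
    (Y : (p : Fin P) → (g : Fin 2) → Fin (n p g) → ℝ)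
    (N T C Wbar Ybar τhat : ℝ)
    (hN : N = ∑ p : Fin P, ∑ g : Fin 2, (n p g : ℝ))
    (hT : T = ∑ p : Fin P, ∑ g : Fin 2, (n p g : ℝ) * W p g)
    (hC : C = ∑ p : Fin P, ∑ g : Fin 2, (n p g : ℝ) * (1 - W p g))
    (hWbar : Wbar = T / N)
    (hYbar : Ybar = (∑ p : Fin P, ∑ g : Fin 2, ∑ i : Fin (n p g), Y p g i) / N)
    (hτ : τhat = (∑ p : Fin P, ∑ g : Fin 2, ∑ i : Fin (n p g), W p g * Y p g i) / T
        - (∑ p : Fin P, ∑ g : Fin 2, ∑ i : Fin (n p g), (1 - W p g) * Y p g i) / C)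
    (ε : (p : Fin P) → (g : Fin 2) → Fin (n p g) → ℝ)
    (hε : ∀ p g i, ε p g i = Y p g i - Ybar - τhat * (W p g - Wbar))
    (SET SEU : Fin P → ℝ)
    (hSET : ∀ p, SET p = ∑ g : Fin 2, ∑ i : Fin (n p g), W p g * ε p g i)
    (hSEU : ∀ p, SEU p = ∑ g : Fin 2, ∑ i : Fin (n p g), (1 - W p g) * ε p g i)
    (Vpair : ℝ)
    (hVpair : Vpair = (∑ p : Fin P, (∑ g : Fin 2, ∑ i : Fin (n p g), (W p g - Wbar) * ε p g i) ^ 2)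
        / (∑ p : Fin P, ∑ g : Fin 2, ∑ i : Fin (n p g), (W p g - Wbar) ^ 2) ^ 2) :
    Vpair = ∑ p : Fin P, (SET p / T - SEU p / C) ^ 2 :=
  pair_clustered_variance_estimator_no_fe_general P hP n hn W hW01 hWpair N T C Wbar hN hT hC hWbar
    ε SET SEU hSET hSEU Vpair hVpair
end

section
/- With the definitions in the context (in particular P ≥ 1, so that T ≥ 1 and C ≥ 1), the unit-clustered variance estimator of the difference-in-means estimator satisfies V̂_unit(τ̂) = Σ_{p=1}^P (SET_p²/T² + SEU_p²/C²). -/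
/-!
A treated unit enters with weight `1 - W̄ = C / N` and a control unit with weight `-W̄ = -T / N`.
Since each pair has exactly one unit of each kind, the numerator is
`(C / N)² Σ SET_p² + (T / N)² Σ SEU_p²`, and the denominator is
`((C / N)² T + (T / N)² C)² = (T C / N)²`.
-/

open Finset

lemma binary_of_add_eq_one {w : Fin 2 → ℝ} (hw : ∀ g, w g = 0 ∨ w g = 1) (hsum : w 0 + w 1 = 1) :
    (w 0 = 1 ∧ w 1 = 0) ∨ (w 0 = 0 ∧ w 1 = 1) := by
  rcases hw 0 with h0 | h0 <;> rcases hw 1 with h1 | h1 <;> simp_all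

lemma sum_sq_sub_mul_of_add_eq_one {w : Fin 2 → ℝ} (hw : ∀ g, w g = 0 ∨ w g = 1)
    (hsum : w 0 + w 1 = 1) (c : ℝ) (x : Fin 2 → ℝ) :
    ∑ g, ((w g - c) * x g) ^ 2
      = (1 - c) ^ 2 * (∑ g, w g * x g) ^ 2 + c ^ 2 * (∑ g, (1 - w g) * x g) ^ 2 := by
  rcases binary_of_add_eq_one hw hsum with ⟨h0, h1⟩ | ⟨h0, h1⟩ <;>
    simp only [Fin.sum_univ_two, h0, h1] <;> ring

lemma sq_sub_of_binary {w : ℝ} (hw : w = 0 ∨ w = 1) (c : ℝ) :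
    (w - c) ^ 2 = (1 - c) ^ 2 * w + c ^ 2 * (1 - w) := by
  rcases hw with rfl | rfl <;> ring

lemma one_le_sum_natCast_mul {κ : Type*} [Fintype κ] {m : κ → ℕ} (hm : ∀ g, 1 ≤ m g)
    {v : κ → ℝ} (hv : ∀ g, 0 ≤ v g) (hsum : ∑ g, v g = 1) : 1 ≤ ∑ g, (m g : ℝ) * v g :=
  hsum ▸ sum_le_sum fun g _ => le_mul_of_one_le_left (hv g) (by exact_mod_cast hm g)

lemma sum_sum_natCast_mul_pos {ι κ : Type*} [Fintype ι] [Nonempty ι] [Fintype κ] {m : ι → κ → ℕ}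
    (hm : ∀ p g, 1 ≤ m p g) {v : ι → κ → ℝ} (hv : ∀ p g, 0 ≤ v p g) (hsum : ∀ p, ∑ g, v p g = 1) :
    0 < ∑ p, ∑ g, (m p g : ℝ) * v p g :=
  sum_pos (fun p _ => one_pos.trans_le (one_le_sum_natCast_mul (hm p) (hv p) (hsum p)))
    univ_nonempty

lemma div_sq_add_div_sq_eq {T C : ℝ} (hT : 0 < T) (hC : 0 < C) (S U : ℝ) :
    ((1 - T / (T + C)) ^ 2 * S + (T / (T + C)) ^ 2 * U)
        / ((1 - T / (T + C)) ^ 2 * T + (T / (T + C)) ^ 2 * C) ^ 2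
      = S / T ^ 2 + U / C ^ 2 := by
  have hN : T + C ≠ 0 := by positivity
  rw [one_sub_div hN, add_sub_cancel_left]
  field_simp
  ring

theorem unit_clustered_variance_estimator_no_fe_general
    (P : ℕ) (hP : 1 ≤ P)
    (n : Fin P → Fin 2 → ℕ) (hn : ∀ p g, 1 ≤ n p g)
    (W : Fin P → Fin 2 → ℝ)
    (hW01 : ∀ p g, W p g = 0 ∨ W p g = 1)
    (hWpair : ∀ p, W p 0 + W p 1 = 1)
    (N T C Wbar : ℝ)
    (hN : N = ∑ p : Fin P, ∑ g : Fin 2, (n p g : ℝ))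
    (hT : T = ∑ p : Fin P, ∑ g : Fin 2, (n p g : ℝ) * W p g)
    (hC : C = ∑ p : Fin P, ∑ g : Fin 2, (n p g : ℝ) * (1 - W p g))
    (hWbar : Wbar = T / N)
    (ε : (p : Fin P) → (g : Fin 2) → Fin (n p g) → ℝ)
    (SET SEU : Fin P → ℝ)
    (hSET : ∀ p, SET p = ∑ g : Fin 2, ∑ i : Fin (n p g), W p g * ε p g i)
    (hSEU : ∀ p, SEU p = ∑ g : Fin 2, ∑ i : Fin (n p g), (1 - W p g) * ε p g i)
    (Vunit : ℝ)
    (hVunit : Vunit = (∑ p : Fin P, ∑ g : Fin 2, ((W p g - Wbar) * ∑ i : Fin (n p g), ε p g i) ^ 2)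
        / (∑ p : Fin P, ∑ g : Fin 2, ∑ i : Fin (n p g), (W p g - Wbar) ^ 2) ^ 2) :
    Vunit = ∑ p : Fin P, (SET p ^ 2 / T ^ 2 + SEU p ^ 2 / C ^ 2) := by
  have hnum : ∑ p, ∑ g, ((W p g - Wbar) * ∑ i, ε p g i) ^ 2
      = (1 - Wbar) ^ 2 * ∑ p, SET p ^ 2 + Wbar ^ 2 * ∑ p, SEU p ^ 2 := by
    simp only [hSET, hSEU, ← mul_sum, sum_sq_sub_mul_of_add_eq_one (hW01 _) (hWpair _),
      sum_add_distrib]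
  have hden : ∑ p, ∑ g, ∑ _i : Fin (n p g), (W p g - Wbar) ^ 2
      = (1 - Wbar) ^ 2 * T + Wbar ^ 2 * C := by
    simp only [hT, hC, sum_const, card_univ, Fintype.card_fin, nsmul_eq_mul,
      sq_sub_of_binary (hW01 _ _), mul_add, mul_left_comm _ ((1 - Wbar) ^ 2),
      mul_left_comm _ (Wbar ^ 2), ← mul_sum, sum_add_distrib]
  have : Nonempty (Fin P) := ⟨⟨0, hP⟩⟩
  have hT_pos : 0 < T := hT ▸ sum_sum_natCast_mul_pos hn
    (fun p g => by rcases hW01 p g with h | h <;> simp [h])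
    (fun p => by simpa [Fin.sum_univ_two] using hWpair p)
  have hC_pos : 0 < C := hC ▸ sum_sum_natCast_mul_pos hn
    (fun p g => by rcases hW01 p g with h | h <;> simp [h])
    (fun p => by simp only [Fin.sum_univ_two]; linarith [hWpair p])
  have hN_eq : N = T + C := by
    simp only [hN, hT, hC, ← sum_add_distrib, mul_sub, mul_one, add_sub_cancel]
  rw [hVunit, hnum, hden, hWbar, hN_eq, div_sq_add_div_sq_eq hT_pos hC_pos, sum_add_distrib,
    sum_div, sum_div]

/-- In a paired experiment with `P ≥ 1` pairs, two units per pair (one treated per pair),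
`n p g ≥ 1` observations in unit `g` of pair `p`, the unit-clustered variance estimator of
the difference-in-means estimator satisfies
`V̂_unit(τ̂) = Σ_p (SET_p² / T² + SEU_p² / C²)`. -/
theorem unit_clustered_variance_estimator_no_fe
    (P : ℕ) (hP : 1 ≤ P)
    (n : Fin P → Fin 2 → ℕ) (hn : ∀ p g, 1 ≤ n p g)
    (W : Fin P → Fin 2 → ℝ)
    (hW01 : ∀ p g, W p g = 0 ∨ W p g = 1)
    (hWpair : ∀ p, W p 0 + W p 1 = 1)
    (Y : (p : Fin P) → (g : Fin 2) → Fin (n p g) → ℝ)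
    (N T C Wbar Ybar τhat : ℝ)
    (hN : N = ∑ p : Fin P, ∑ g : Fin 2, (n p g : ℝ))
    (hT : T = ∑ p : Fin P, ∑ g : Fin 2, (n p g : ℝ) * W p g)
    (hC : C = ∑ p : Fin P, ∑ g : Fin 2, (n p g : ℝ) * (1 - W p g))
    (hWbar : Wbar = T / N)
    (hYbar : Ybar = (∑ p : Fin P, ∑ g : Fin 2, ∑ i : Fin (n p g), Y p g i) / N)
    (hτ : τhat = (∑ p : Fin P, ∑ g : Fin 2, ∑ i : Fin (n p g), W p g * Y p g i) / T
        - (∑ p : Fin P, ∑ g : Fin 2, ∑ i : Fin (n p g), (1 - W p g) * Y p g i) / C)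
    (ε : (p : Fin P) → (g : Fin 2) → Fin (n p g) → ℝ)
    (hε : ∀ p g i, ε p g i = Y p g i - Ybar - τhat * (W p g - Wbar))
    (SET SEU : Fin P → ℝ)
    (hSET : ∀ p, SET p = ∑ g : Fin 2, ∑ i : Fin (n p g), W p g * ε p g i)
    (hSEU : ∀ p, SEU p = ∑ g : Fin 2, ∑ i : Fin (n p g), (1 - W p g) * ε p g i)
    (Vunit : ℝ)
    (hVunit : Vunit = (∑ p : Fin P, ∑ g : Fin 2, ((W p g - Wbar) * ∑ i : Fin (n p g), ε p g i) ^ 2)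
        / (∑ p : Fin P, ∑ g : Fin 2, ∑ i : Fin (n p g), (W p g - Wbar) ^ 2) ^ 2) :
    Vunit = ∑ p : Fin P, (SET p ^ 2 / T ^ 2 + SEU p ^ 2 / C ^ 2) :=
  unit_clustered_variance_estimator_no_fe_general P hP n hn W hW01 hWpair N T C Wbar hN hT hC hWbar
    ε SET SEU hSET hSEU Vunit hVunit
end

section
/- With the definitions in the context, the pair-clustered variance estimator of the fixed-effects estimator satisfies V̂_pair(τ̂_fe) = Σ_{p=1}^P ω_p² SET_{p,fe}² (1/n_{1p} + 1/n_{2p})². -/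
/-!
Within a pair the residuals sum to zero, whatever the value of `τ̂_fe`, so the clustered
score `Σ (W - W̄) u` of pair `p` is `SET_{p,fe}`. The design term `Σ (W - W̄)²` of a pair is
its harmonic size `(1/n₁ + 1/n₂)⁻¹`, because exactly one unit is treated. The weights `ω_p`
are these harmonic sizes normalised by their sum, so both sides equal
`Σ_p SET_{p,fe}² / (Σ_p (1/n_{1p} + 1/n_{2p})⁻¹)²`.
-/

open Finset

theorem sum_sum_sub_mean_sub_mul_sub_mean_eq_zero {ι K : Type*} [Fintype ι] [Field K]
    (m : ι → ℕ) (hm : ∑ g, (m g : K) ≠ 0) (Y : (g : ι) → Fin (m g) → K) (W : ι → K) (τ : K) :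
    ∑ g, ∑ i : Fin (m g), (Y g i - (∑ g, ∑ i, Y g i) / ∑ g, (m g : K)
      - τ * (W g - (∑ g, (m g : K) * W g) / ∑ g, (m g : K))) = 0 := by
  simp only [sum_sub_distrib, sum_const, card_univ, Fintype.card_fin, nsmul_eq_mul, ← sum_mul,
    mul_sub, mul_left_comm _ τ, ← mul_sum]
  rw [mul_div_cancel₀ _ hm, mul_div_cancel₀ _ hm]
  ring

theorem sum_sum_sub_mul_eq_of_sum_sum_eq_zero {ι R : Type*} [Fintype ι] [Ring R] {m : ι → ℕ}
    (a : ι → R) (c : R) (u : (g : ι) → Fin (m g) → R) (hu : ∑ g, ∑ i, u g i = 0) :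
    ∑ g, ∑ i, (a g - c) * u g i = ∑ g, ∑ i, a g * u g i := by
  simp only [sub_mul, sum_sub_distrib, ← mul_sum, hu, mul_zero, sub_zero]

theorem Fin.sum_two_mul_sq_sub_weightedMean {K : Type*} [Field K] [LinearOrder K]
    [IsStrictOrderedRing K] (m x : Fin 2 → K) (hm : ∀ g, 0 < m g) :
    ∑ g, m g * (x g - (∑ g, m g * x g) / ∑ g, m g) ^ 2
      = (x 0 - x 1) ^ 2 * (∑ g, 1 / m g)⁻¹ := by
  have h0 := hm 0
  have h1 := hm 1
  simp only [Fin.sum_univ_two]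
  field_simp
  ring

theorem pair_clustered_variance_estimator_fe_general
    (P : ℕ)
    (n : Fin P → Fin 2 → ℕ) (hn : ∀ p g, 1 ≤ n p g)
    (W : Fin P → Fin 2 → ℝ)
    (hW01 : ∀ p g, W p g = 0 ∨ W p g = 1)
    (hWpair : ∀ p, W p 0 + W p 1 = 1)
    (Y : (p : Fin P) → (g : Fin 2) → Fin (n p g) → ℝ)
    (w : Fin P → ℝ)
    (hw : ∀ p, w p = (1 / (n p 0 : ℝ) + 1 / (n p 1 : ℝ))⁻¹
        / ∑ p' : Fin P, (1 / (n p' 0 : ℝ) + 1 / (n p' 1 : ℝ))⁻¹)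
    (τfe : ℝ)
    (Tp np Wbarp Ybarp : Fin P → ℝ)
    (hTp : ∀ p, Tp p = ∑ g : Fin 2, (n p g : ℝ) * W p g)
    (hnp : ∀ p, np p = (n p 0 : ℝ) + (n p 1 : ℝ))
    (hWbarp : ∀ p, Wbarp p = Tp p / np p)
    (hYbarp : ∀ p, Ybarp p = (∑ g : Fin 2, ∑ i : Fin (n p g), Y p g i) / np p)
    (u : (p : Fin P) → (g : Fin 2) → Fin (n p g) → ℝ)
    (hu : ∀ p g i, u p g i = Y p g i - Ybarp p - τfe * (W p g - Wbarp p))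
    (SETfe : Fin P → ℝ)
    (hSETfe : ∀ p, SETfe p = ∑ g : Fin 2, ∑ i : Fin (n p g), W p g * u p g i)
    (Vpairfe : ℝ)
    (hVpairfe : Vpairfe
        = (∑ p : Fin P, (∑ g : Fin 2, ∑ i : Fin (n p g), (W p g - Wbarp p) * u p g i) ^ 2)
        / (∑ p : Fin P, ∑ g : Fin 2, ∑ i : Fin (n p g), (W p g - Wbarp p) ^ 2) ^ 2) :
    Vpairfe = ∑ p : Fin P,
      (w p) ^ 2 * (SETfe p) ^ 2 * (1 / (n p 0 : ℝ) + 1 / (n p 1 : ℝ)) ^ 2 := by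
  have hpos : ∀ p g, (0 : ℝ) < n p g := fun p g => by exact_mod_cast hn p g
  have hnp_sum : ∀ p, np p = ∑ g, (n p g : ℝ) := fun p => by rw [hnp, Fin.sum_univ_two]
  have hsize : ∀ p, ∑ g, (n p g : ℝ) ≠ 0 := fun p =>
    (sum_pos (fun g _ => hpos p g) univ_nonempty).ne'
  have hscore : ∀ p, ∑ g, ∑ i, (W p g - Wbarp p) * u p g i = SETfe p := fun p => by
    rw [hSETfe, sum_sum_sub_mul_eq_of_sum_sum_eq_zero]
    simpa only [hu, hYbarp, hWbarp, hTp, hnp_sum] using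
      sum_sum_sub_mean_sub_mul_sub_mean_eq_zero (n p) (hsize p) (Y p) (W p) τfe
  have hdesign : ∀ p, ∑ g, ∑ _i : Fin (n p g), (W p g - Wbarp p) ^ 2
      = (1 / (n p 0 : ℝ) + 1 / (n p 1 : ℝ))⁻¹ := fun p => by
    have hbinary : (W p 0 - W p 1) ^ 2 = 1 := by
      rcases hW01 p 0 with h | h <;> nlinarith [hWpair p]
    simp only [sum_const, card_univ, Fintype.card_fin, nsmul_eq_mul, hWbarp, hTp, hnp_sum]
    rw [Fin.sum_two_mul_sq_sub_weightedMean _ _ (hpos p), hbinary, one_mul, Fin.sum_univ_two]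
  rw [hVpairfe, sum_congr rfl fun p _ => congrArg (· ^ 2) (hscore p),
    sum_congr rfl fun p _ => hdesign p, sum_div]
  refine sum_congr rfl fun p _ => ?_
  have hharm : 1 / (n p 0 : ℝ) + 1 / (n p 1 : ℝ) ≠ 0 := by
    have := hpos p 0; have := hpos p 1; positivity
  rw [hw p]
  field_simp

/-- In a paired experiment, the pair-clustered variance estimator of the pair-fixed-effects
estimator satisfies `V̂_pair(τ̂_fe) = Σ_p ω_p² SET_{p,fe}² (1/n_{1p} + 1/n_{2p})²`. -/
theorem pair_clustered_variance_estimator_fe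
    (P : ℕ) (hP : 1 ≤ P)
    (n : Fin P → Fin 2 → ℕ) (hn : ∀ p g, 1 ≤ n p g)
    (W : Fin P → Fin 2 → ℝ)
    (hW01 : ∀ p g, W p g = 0 ∨ W p g = 1)
    (hWpair : ∀ p, W p 0 + W p 1 = 1)
    (Y : (p : Fin P) → (g : Fin 2) → Fin (n p g) → ℝ)
    (w : Fin P → ℝ)
    (hw : ∀ p, w p = (1 / (n p 0 : ℝ) + 1 / (n p 1 : ℝ))⁻¹
        / ∑ p' : Fin P, (1 / (n p' 0 : ℝ) + 1 / (n p' 1 : ℝ))⁻¹)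
    (τfe : ℝ)
    (hτfe : τfe = ∑ p : Fin P, w p * ∑ g : Fin 2,
        (2 * W p g - 1) * (∑ i : Fin (n p g), Y p g i) / (n p g : ℝ))
    (Tp np Wbarp Ybarp : Fin P → ℝ)
    (hTp : ∀ p, Tp p = ∑ g : Fin 2, (n p g : ℝ) * W p g)
    (hnp : ∀ p, np p = (n p 0 : ℝ) + (n p 1 : ℝ))
    (hWbarp : ∀ p, Wbarp p = Tp p / np p)
    (hYbarp : ∀ p, Ybarp p = (∑ g : Fin 2, ∑ i : Fin (n p g), Y p g i) / np p)
    (u : (p : Fin P) → (g : Fin 2) → Fin (n p g) → ℝ)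
    (hu : ∀ p g i, u p g i = Y p g i - Ybarp p - τfe * (W p g - Wbarp p))
    (SETfe : Fin P → ℝ)
    (hSETfe : ∀ p, SETfe p = ∑ g : Fin 2, ∑ i : Fin (n p g), W p g * u p g i)
    (Vpairfe : ℝ)
    (hVpairfe : Vpairfe
        = (∑ p : Fin P, (∑ g : Fin 2, ∑ i : Fin (n p g), (W p g - Wbarp p) * u p g i) ^ 2)
        / (∑ p : Fin P, ∑ g : Fin 2, ∑ i : Fin (n p g), (W p g - Wbarp p) ^ 2) ^ 2) :
    Vpairfe = ∑ p : Fin P,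
      (w p) ^ 2 * (SETfe p) ^ 2 * (1 / (n p 0 : ℝ) + 1 / (n p 1 : ℝ)) ^ 2 :=
  pair_clustered_variance_estimator_fe_general P n hn W hW01 hWpair Y w hw τfe Tp np Wbarp Ybarp hTp
    hnp hWbarp hYbarp u hu SETfe hSETfe Vpairfe hVpairfe
end

section
/- With the definitions in the context, the unit-clustered variance estimator of the fixed-effects estimator satisfies V̂_unit(τ̂_fe) = Σ_{p=1}^P ω_p² SET_{p,fe}² (1/n_{1p}² + 1/n_{2p}²). -/
/-!
Write `a, b` for the unit sizes of a pair and `S₀, S₁` for the within-unit sums of residuals.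
The residuals of the fixed-effects regression sum to zero within every pair, whatever the
slope, so `S₁ = -S₀` and `SET_{p,fe} = (W₀ - W₁) S₀`. Since `W_g - W̄ = ±(W₀ - W₁) · (other size)/(a + b)`,
each pair contributes `(W₀ - W₁)² H` with `H = (1/a + 1/b)⁻¹` to the denominator and
`H² SET² (1/a² + 1/b²)` to the numerator; for a binary treatment `(W₀ - W₁)² = 1`, and
`ω_p = H_p / Σ H` finishes the computation.
-/

open Finset

lemma sum_mul_sub_weighted_mean_eq_zero {G : Type*} [Fintype G] (c x : G → ℝ)
    (hc : ∑ g, c g ≠ 0) :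
    ∑ g, c g * (x g - (∑ g, c g * x g) / ∑ g, c g) = 0 := by
  simp only [mul_sub, sum_sub_distrib, ← sum_mul]
  field_simp
  ring

lemma sum_residuals_eq_zero {G : Type*} [Fintype G] {m : G → ℕ} (hm : ∑ g, (m g : ℝ) ≠ 0)
    (Y : (g : G) → Fin (m g) → ℝ) (W : G → ℝ) (τ : ℝ) :
    ∑ g, ∑ i : Fin (m g), (Y g i - (∑ g, ∑ i, Y g i) / ∑ g, (m g : ℝ)
      - τ * (W g - (∑ g, (m g : ℝ) * W g) / ∑ g, (m g : ℝ))) = 0 := by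
  have hW := sum_mul_sub_weighted_mean_eq_zero (fun g => (m g : ℝ)) W hm
  simp only [sum_sub_distrib, sum_const, card_univ, Fintype.card_fin, nsmul_eq_mul,
    mul_left_comm _ τ, ← mul_sum, hW, mul_zero]
  rw [← sum_mul, mul_div_cancel₀ _ hm, sub_self, sub_zero]

lemma mul_sq_sub_weighted_mean_add_mul_sq {a b : ℝ} (ha : 0 < a) (hb : 0 < b) (W₀ W₁ : ℝ) :
    a * (W₀ - (a * W₀ + b * W₁) / (a + b)) ^ 2 + b * (W₁ - (a * W₀ + b * W₁) / (a + b)) ^ 2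
      = (W₀ - W₁) ^ 2 * (1 / a + 1 / b)⁻¹ := by
  rw [one_div_add_one_div ha.ne' hb.ne', inv_div]
  field_simp
  ring

lemma sq_sub_weighted_mean_mul_add_sq {a b W₀ W₁ S₀ S₁ : ℝ} (ha : 0 < a) (hb : 0 < b)
    (hS : S₀ + S₁ = 0) :
    ((W₀ - (a * W₀ + b * W₁) / (a + b)) * S₀) ^ 2
      + ((W₁ - (a * W₀ + b * W₁) / (a + b)) * S₁) ^ 2
      = (1 / a + 1 / b)⁻¹ ^ 2 * (W₀ * S₀ + W₁ * S₁) ^ 2 * (1 / a ^ 2 + 1 / b ^ 2) := by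
  obtain rfl : S₁ = -S₀ := eq_neg_of_add_eq_zero_right hS
  rw [one_div_add_one_div ha.ne' hb.ne', inv_div]
  field_simp
  ring

lemma sq_sub_eq_one_of_add_eq_one {x y : ℝ} (hx : x = 0 ∨ x = 1) (hxy : x + y = 1) :
    (x - y) ^ 2 = 1 := by
  obtain rfl : y = 1 - x := by linarith
  rcases hx with rfl | rfl <;> norm_num

theorem unit_clustered_variance_estimator_fe_general
    (P : ℕ)
    (n : Fin P → Fin 2 → ℕ) (hn : ∀ p g, 1 ≤ n p g)
    (W : Fin P → Fin 2 → ℝ)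
    (hW01 : ∀ p g, W p g = 0 ∨ W p g = 1)
    (hWpair : ∀ p, W p 0 + W p 1 = 1)
    (Y : (p : Fin P) → (g : Fin 2) → Fin (n p g) → ℝ)
    (w : Fin P → ℝ)
    (hw : ∀ p, w p = (1 / (n p 0 : ℝ) + 1 / (n p 1 : ℝ))⁻¹
        / ∑ p' : Fin P, (1 / (n p' 0 : ℝ) + 1 / (n p' 1 : ℝ))⁻¹)
    (τfe : ℝ)
    (Tp np Wbarp Ybarp : Fin P → ℝ)
    (hTp : ∀ p, Tp p = ∑ g : Fin 2, (n p g : ℝ) * W p g)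
    (hnp : ∀ p, np p = (n p 0 : ℝ) + (n p 1 : ℝ))
    (hWbarp : ∀ p, Wbarp p = Tp p / np p)
    (hYbarp : ∀ p, Ybarp p = (∑ g : Fin 2, ∑ i : Fin (n p g), Y p g i) / np p)
    (u : (p : Fin P) → (g : Fin 2) → Fin (n p g) → ℝ)
    (hu : ∀ p g i, u p g i = Y p g i - Ybarp p - τfe * (W p g - Wbarp p))
    (SETfe : Fin P → ℝ)
    (hSETfe : ∀ p, SETfe p = ∑ g : Fin 2, ∑ i : Fin (n p g), W p g * u p g i)
    (Vunitfe : ℝ)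
    (hVunitfe : Vunitfe
        = (∑ p : Fin P, ∑ g : Fin 2, ((W p g - Wbarp p) * ∑ i : Fin (n p g), u p g i) ^ 2)
        / (∑ p : Fin P, ∑ g : Fin 2, ∑ i : Fin (n p g), (W p g - Wbarp p) ^ 2) ^ 2) :
    Vunitfe = ∑ p : Fin P,
      (w p) ^ 2 * (SETfe p) ^ 2 * (1 / (n p 0 : ℝ) ^ 2 + 1 / (n p 1 : ℝ) ^ 2) := by
  have hpos (p g) : (0 : ℝ) < n p g := by exact_mod_cast hn p g
  have hnp' (p) : np p = ∑ g, (n p g : ℝ) := by rw [hnp, Fin.sum_univ_two]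
  have hWbar (p) : Wbarp p = (n p 0 * W p 0 + n p 1 * W p 1) / (n p 0 + n p 1) := by
    rw [hWbarp, hTp, hnp, Fin.sum_univ_two]
  have hres (p) : ∑ i, u p 0 i + ∑ i, u p 1 i = 0 := by
    rw [← Fin.sum_univ_two fun g => ∑ i : Fin (n p g), u p g i]
    simp only [hu, hYbarp, hWbarp, hTp, hnp']
    exact sum_residuals_eq_zero (sum_pos (fun g _ => hpos p g) univ_nonempty).ne' _ _ _
  have hden (p) : ∑ g, ∑ i : Fin (n p g), (W p g - Wbarp p) ^ 2 = (1 / (n p 0 : ℝ) + 1 / n p 1)⁻¹ := by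
    simp only [Fin.sum_univ_two, sum_const, card_univ, Fintype.card_fin, nsmul_eq_mul, hWbar]
    rw [mul_sq_sub_weighted_mean_add_mul_sq (hpos p 0) (hpos p 1),
      sq_sub_eq_one_of_add_eq_one (hW01 p 0) (hWpair p), one_mul]
  have hnum (p) : ∑ g, ((W p g - Wbarp p) * ∑ i, u p g i) ^ 2
      = (1 / (n p 0 : ℝ) + 1 / n p 1)⁻¹ ^ 2 * SETfe p ^ 2 * (1 / n p 0 ^ 2 + 1 / n p 1 ^ 2) := by
    rw [Fin.sum_univ_two, hSETfe, Fin.sum_univ_two, ← mul_sum, ← mul_sum, hWbar]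
    exact sq_sub_weighted_mean_mul_add_sq (hpos p 0) (hpos p 1) (hres p)
  rw [hVunitfe, sum_congr rfl fun p _ => hnum p, sum_congr rfl fun p _ => hden p, sum_div]
  refine sum_congr rfl fun p _ => ?_
  rw [hw]
  ring

/-- In a paired experiment, the unit-clustered variance estimator of the pair-fixed-effects
estimator satisfies `V̂_unit(τ̂_fe) = Σ_p ω_p² SET_{p,fe}² (1/n_{1p}² + 1/n_{2p}²)`. -/
theorem unit_clustered_variance_estimator_fe
    (P : ℕ) (hP : 1 ≤ P)
    (n : Fin P → Fin 2 → ℕ) (hn : ∀ p g, 1 ≤ n p g)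
    (W : Fin P → Fin 2 → ℝ)
    (hW01 : ∀ p g, W p g = 0 ∨ W p g = 1)
    (hWpair : ∀ p, W p 0 + W p 1 = 1)
    (Y : (p : Fin P) → (g : Fin 2) → Fin (n p g) → ℝ)
    (w : Fin P → ℝ)
    (hw : ∀ p, w p = (1 / (n p 0 : ℝ) + 1 / (n p 1 : ℝ))⁻¹
        / ∑ p' : Fin P, (1 / (n p' 0 : ℝ) + 1 / (n p' 1 : ℝ))⁻¹)
    (τfe : ℝ)
    (hτfe : τfe = ∑ p : Fin P, w p * ∑ g : Fin 2,
        (2 * W p g - 1) * (∑ i : Fin (n p g), Y p g i) / (n p g : ℝ))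
    (Tp np Wbarp Ybarp : Fin P → ℝ)
    (hTp : ∀ p, Tp p = ∑ g : Fin 2, (n p g : ℝ) * W p g)
    (hnp : ∀ p, np p = (n p 0 : ℝ) + (n p 1 : ℝ))
    (hWbarp : ∀ p, Wbarp p = Tp p / np p)
    (hYbarp : ∀ p, Ybarp p = (∑ g : Fin 2, ∑ i : Fin (n p g), Y p g i) / np p)
    (u : (p : Fin P) → (g : Fin 2) → Fin (n p g) → ℝ)
    (hu : ∀ p g i, u p g i = Y p g i - Ybarp p - τfe * (W p g - Wbarp p))
    (SETfe : Fin P → ℝ)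
    (hSETfe : ∀ p, SETfe p = ∑ g : Fin 2, ∑ i : Fin (n p g), W p g * u p g i)
    (Vunitfe : ℝ)
    (hVunitfe : Vunitfe
        = (∑ p : Fin P, ∑ g : Fin 2, ((W p g - Wbarp p) * ∑ i : Fin (n p g), u p g i) ^ 2)
        / (∑ p : Fin P, ∑ g : Fin 2, ∑ i : Fin (n p g), (W p g - Wbarp p) ^ 2) ^ 2) :
    Vunitfe = ∑ p : Fin P,
      (w p) ^ 2 * (SETfe p) ^ 2 * (1 / (n p 0 : ℝ) ^ 2 + 1 / (n p 1 : ℝ) ^ 2) :=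
  unit_clustered_variance_estimator_fe_general P n hn W hW01 hWpair Y w hw τfe Tp np Wbarp Ybarp hTp
    hnp hWbarp hYbarp u hu SETfe hSETfe Vunitfe hVunitfe
end

section
/- If n_{1p} = n_{2p} for every pair p (the two randomization units in each pair have the same number of observations), then the difference-in-means estimator equals the pair-fixed-effects estimator: τ̂ = τ̂_fe. -/
/-!
With equal unit sizes `m_p` in every pair, exactly `m_p` observations of pair `p` are treated and
`m_p` are controls, so `T = C = Σ m_p` and `τ̂` is the sum over pairs of the within-pair contrasts
`Σ_g (2W_{gp} - 1) Σ_i Y_{igp}`, divided by `Σ m_p`. The harmonic weight `(1/m_p + 1/m_p)⁻¹` is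
`m_p / 2`, so `ω_p = m_p / Σ m_p`, and it cancels the `1/m_p` of the within-unit means in `τ̂_fe`,
leaving the same expression.
-/

open Finset

lemma inv_one_div_add_one_div_self (m : ℝ) : (1 / m + 1 / m)⁻¹ = m / 2 := by
  rw [← two_mul, mul_one_div, inv_div]

lemma harmonic_weight_of_balanced {ι : Type*} (s : Finset ι) (m : ι → ℝ) (p : ι) :
    (1 / m p + 1 / m p)⁻¹ / ∑ q ∈ s, (1 / m q + 1 / m q)⁻¹ = m p / ∑ q ∈ s, m q := by
  simp only [inv_one_div_add_one_div_self]
  rw [← sum_div, div_div_div_cancel_right₀ two_ne_zero]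

lemma sum_fin_two_mul_of_eq (k w : Fin 2 → ℝ) (hk : k 0 = k 1) (hw : w 0 + w 1 = 1) :
    ∑ g, k g * w g = k 0 := by
  rw [Fin.sum_univ_two, ← hk]
  linear_combination k 0 * hw

lemma sum_fin_two_mul_one_sub_of_eq (k w : Fin 2 → ℝ) (hk : k 0 = k 1) (hw : w 0 + w 1 = 1) :
    ∑ g, k g * (1 - w g) = k 0 := by
  rw [Fin.sum_univ_two, ← hk]
  linear_combination -k 0 * hw

lemma sum_mul_sub_sum_one_sub_mul {ι : Type*} (s : Finset ι) (w : ℝ) (y : ι → ℝ) :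
    ∑ i ∈ s, w * y i - ∑ i ∈ s, (1 - w) * y i = (2 * w - 1) * ∑ i ∈ s, y i := by
  rw [← mul_sum, ← mul_sum]
  ring

lemma natCast_mul_mul_sum_div_natCast (m : ℕ) (c : ℝ) (y : Fin m → ℝ) :
    (m : ℝ) * (c * (∑ i, y i) / m) = c * ∑ i, y i := by
  refine mul_div_cancel_of_imp' fun hm => ?_
  obtain rfl : m = 0 := by exact_mod_cast hm
  simp

theorem diff_in_means_eq_fixed_effects_estimator_general
    (P : ℕ)
    (n : Fin P → Fin 2 → ℕ)
    (hbal : ∀ p, n p 0 = n p 1)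
    (W : Fin P → Fin 2 → ℝ)
    (hWpair : ∀ p, W p 0 + W p 1 = 1)
    (Y : (p : Fin P) → (g : Fin 2) → Fin (n p g) → ℝ)
    (T C τhat : ℝ)
    (hT : T = ∑ p : Fin P, ∑ g : Fin 2, (n p g : ℝ) * W p g)
    (hC : C = ∑ p : Fin P, ∑ g : Fin 2, (n p g : ℝ) * (1 - W p g))
    (hτ : τhat = (∑ p : Fin P, ∑ g : Fin 2, ∑ i : Fin (n p g), W p g * Y p g i) / T
        - (∑ p : Fin P, ∑ g : Fin 2, ∑ i : Fin (n p g), (1 - W p g) * Y p g i) / C)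
    (w : Fin P → ℝ)
    (hw : ∀ p, w p = (1 / (n p 0 : ℝ) + 1 / (n p 1 : ℝ))⁻¹
        / ∑ p' : Fin P, (1 / (n p' 0 : ℝ) + 1 / (n p' 1 : ℝ))⁻¹)
    (τfe : ℝ)
    (hτfe : τfe = ∑ p : Fin P, w p * ∑ g : Fin 2,
        (2 * W p g - 1) * (∑ i : Fin (n p g), Y p g i) / (n p g : ℝ)) :
    τhat = τfe := by
  have hbalℝ : ∀ p, (n p 0 : ℝ) = n p 1 := fun p => congrArg Nat.cast (hbal p)
  set S : ℝ := ∑ p, (n p 0 : ℝ)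
  have hTS : T = S := hT.trans <| sum_congr rfl fun p _ =>
    sum_fin_two_mul_of_eq (fun g => (n p g : ℝ)) (W p) (hbalℝ p) (hWpair p)
  have hCS : C = S := hC.trans <| sum_congr rfl fun p _ =>
    sum_fin_two_mul_one_sub_of_eq (fun g => (n p g : ℝ)) (W p) (hbalℝ p) (hWpair p)
  have hwS : ∀ p g, w p = n p g / S := by
    intro p g
    have hw0 : w p = n p 0 / S := by
      simp only [hw, ← hbalℝ]
      exact harmonic_weight_of_balanced univ (fun q => (n q 0 : ℝ)) p
    fin_cases g
    exacts [hw0, hw0.trans (by rw [hbalℝ]; rfl)]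
  rw [hτ, hτfe, hTS, hCS, div_sub_div_same, ← sum_sub_distrib, sum_div]
  refine sum_congr rfl fun p _ => ?_
  rw [← sum_sub_distrib, mul_sum, sum_div]
  refine sum_congr rfl fun g _ => ?_
  rw [sum_mul_sub_sum_one_sub_mul, hwS p g, div_mul_eq_mul_div, natCast_mul_mul_sum_div_natCast]

/-- If the two randomization units in each pair have the same number of observations
(`n_{1p} = n_{2p}` for every `p`), then the difference-in-means estimator equals the
pair-fixed-effects estimator: `τ̂ = τ̂_fe`. -/
theorem diff_in_means_eq_fixed_effects_estimator
    (P : ℕ) (hP : 1 ≤ P)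
    (n : Fin P → Fin 2 → ℕ) (hn : ∀ p g, 1 ≤ n p g)
    (hbal : ∀ p, n p 0 = n p 1)
    (W : Fin P → Fin 2 → ℝ)
    (hW01 : ∀ p g, W p g = 0 ∨ W p g = 1)
    (hWpair : ∀ p, W p 0 + W p 1 = 1)
    (Y : (p : Fin P) → (g : Fin 2) → Fin (n p g) → ℝ)
    (T C τhat : ℝ)
    (hT : T = ∑ p : Fin P, ∑ g : Fin 2, (n p g : ℝ) * W p g)
    (hC : C = ∑ p : Fin P, ∑ g : Fin 2, (n p g : ℝ) * (1 - W p g))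
    (hτ : τhat = (∑ p : Fin P, ∑ g : Fin 2, ∑ i : Fin (n p g), W p g * Y p g i) / T
        - (∑ p : Fin P, ∑ g : Fin 2, ∑ i : Fin (n p g), (1 - W p g) * Y p g i) / C)
    (w : Fin P → ℝ)
    (hw : ∀ p, w p = (1 / (n p 0 : ℝ) + 1 / (n p 1 : ℝ))⁻¹
        / ∑ p' : Fin P, (1 / (n p' 0 : ℝ) + 1 / (n p' 1 : ℝ))⁻¹)
    (τfe : ℝ)
    (hτfe : τfe = ∑ p : Fin P, w p * ∑ g : Fin 2,
        (2 * W p g - 1) * (∑ i : Fin (n p g), Y p g i) / (n p g : ℝ)) :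
    τhat = τfe :=
  diff_in_means_eq_fixed_effects_estimator_general P n hbal W hWpair Y T C τhat hT hC hτ w hw τfe
    hτfe
end

section
/- Under the balanced-design assumption n_{1p} = n_{2p} = n/(2P) for all p, the pair-clustered variance estimator of the difference-in-means estimator equals the empirical variance of the within-pair estimators: V̂_pair(τ̂) = (1/P²)Σ_{p=1}^P (τ̂_p − τ̂)². -/
open Finset

/-! With equal unit sizes `m` and one treated unit per pair, `W̄ = 1/2`, so `W - W̄ = ±1/2` with
opposite signs inside each pair. Hence the pair's score `Σ (W - W̄) ε` loses its `Ȳ` term, its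
`τ̂` term is `-m τ̂ / 2` whatever `τ̂` is, and what remains is `(m/2) τ̂_p`; the bread
`Σ (W - W̄)²` is `P m / 2`. The common factor `m / 2` cancels between the squared score and the
squared bread. -/

lemma sum_mul_sub_sub {m : ℕ} (c a b : ℝ) (y : Fin m → ℝ) :
    ∑ i, c * (y i - a - b) = c * ∑ i, y i - m * c * (a + b) := by
  simp only [mul_sub, sum_sub_distrib, ← mul_sum, sum_const, card_univ, Fintype.card_fin,
    nsmul_eq_mul]
  ring

lemma sum_pair_score_eq {m : ℕ} (hm : m ≠ 0) (w : Fin 2 → ℝ) (hw01 : w 0 = 0 ∨ w 0 = 1)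
    (hw : w 0 + w 1 = 1) (y : Fin 2 → Fin m → ℝ) (a b : ℝ) :
    ∑ g, ∑ i, (w g - 1 / 2) * (y g i - a - b * (w g - 1 / 2)) =
      m / 2 * (2 / (m + m) * ∑ g, (2 * w g - 1) * ∑ i, y g i - b) := by
  simp only [Fin.sum_univ_two, sum_mul_sub_sub]
  rw [show w 1 = 1 - w 0 by linarith]
  rcases hw01 with h | h <;> rw [h] <;> field_simp <;> ring

section

variable {ι : Type*} [Fintype ι] (m : ℕ) {W : ι → Fin 2 → ℝ}

lemma sum_sum_size_mul_treatment (hW : ∀ p, W p 0 + W p 1 = 1) :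
    ∑ p, ∑ g, (m : ℝ) * W p g = (Fintype.card ι : ℝ) * m := by
  simp [Fin.sum_univ_two, ← mul_add, hW, mul_comm]

lemma sum_sum_sum_sq_treatment_sub_half (hW01 : ∀ p g, W p g = 0 ∨ W p g = 1) :
    ∑ p, ∑ g, ∑ _i : Fin m, (W p g - 1 / 2) ^ 2 = (Fintype.card ι : ℝ) * m / 2 := by
  have hsq : ∀ p g, (W p g - 1 / 2) ^ 2 = (1 / 4 : ℝ) := fun p g => by
    rcases hW01 p g with h | h <;> rw [h] <;> norm_num
  simp only [hsq, sum_const, card_univ, Fintype.card_fin, nsmul_eq_mul]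
  ring

end

lemma sum_sq_mul_div_sq_mul {ι : Type*} [Fintype ι] {c : ℝ} (hc : c ≠ 0) (k : ℝ) (x : ι → ℝ) :
    (∑ p, (c * x p) ^ 2) / (k * c) ^ 2 = (∑ p, x p ^ 2) / k ^ 2 := by
  simp only [mul_pow, ← mul_sum]
  rw [mul_comm (k ^ 2), mul_div_mul_left _ _ (pow_ne_zero 2 hc)]

theorem pair_clustered_variance_eq_empirical_variance_general
    (P : ℕ) (hP : 1 ≤ P)
    (n : Fin P → Fin 2 → ℕ) (hn : ∀ p g, 1 ≤ n p g)
    (hbal : ∀ p g, n p g * (2 * P) = ∑ p' : Fin P, ∑ g' : Fin 2, n p' g')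
    (W : Fin P → Fin 2 → ℝ)
    (hW01 : ∀ p g, W p g = 0 ∨ W p g = 1)
    (hWpair : ∀ p, W p 0 + W p 1 = 1)
    (Y : (p : Fin P) → (g : Fin 2) → Fin (n p g) → ℝ)
    (N T Wbar Ybar τhat : ℝ)
    (hN : N = ∑ p : Fin P, ∑ g : Fin 2, (n p g : ℝ))
    (hT : T = ∑ p : Fin P, ∑ g : Fin 2, (n p g : ℝ) * W p g)
    (hWbar : Wbar = T / N)
    (ε : (p : Fin P) → (g : Fin 2) → Fin (n p g) → ℝ)
    (hε : ∀ p g i, ε p g i = Y p g i - Ybar - τhat * (W p g - Wbar))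
    (Vpair : ℝ)
    (hVpair : Vpair = (∑ p : Fin P,
        (∑ g : Fin 2, ∑ i : Fin (n p g), (W p g - Wbar) * ε p g i) ^ 2)
        / (∑ p : Fin P, ∑ g : Fin 2, ∑ i : Fin (n p g), (W p g - Wbar) ^ 2) ^ 2)
    (np τp : Fin P → ℝ)
    (hnp : ∀ p, np p = (n p 0 : ℝ) + (n p 1 : ℝ))
    (hτp : ∀ p, τp p = (2 / np p) * ∑ g : Fin 2,
        (2 * W p g - 1) * ∑ i : Fin (n p g), Y p g i) :
    Vpair = (∑ p : Fin P, (τp p - τhat) ^ 2) / P ^ 2 := by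
  obtain ⟨m, hsize⟩ : ∃ m, ∀ p g, n p g = m := ⟨n ⟨0, hP⟩ 0, fun p g =>
    Nat.eq_of_mul_eq_mul_right (by omega) ((hbal p g).trans (hbal _ 0).symm)⟩
  obtain rfl : n = fun _ _ => m := funext₂ hsize
  beta_reduce at hn hN hT hnp
  have hm0 : m ≠ 0 := Nat.one_le_iff_ne_zero.mp (hn ⟨0, hP⟩ 0)
  have hWbar_half : Wbar = 1 / 2 := by
    rw [hWbar, hT, hN, sum_sum_size_mul_treatment m hWpair]
    simp only [sum_const, card_univ, Fintype.card_fin, nsmul_eq_mul, Nat.cast_ofNat]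
    field_simp
  subst hWbar_half
  have hscore : ∀ p, ∑ g, ∑ i, (W p g - 1 / 2) * ε p g i = m / 2 * (τp p - τhat) := fun p => by
    simp only [hε, hτp, hnp, sum_pair_score_eq hm0 (W p) (hW01 p 0) (hWpair p)]
  rw [hVpair, sum_sum_sum_sq_treatment_sub_half m hW01, Fintype.card_fin]
  simp only [hscore]
  rw [mul_div_assoc, sum_sq_mul_div_sq_mul (by positivity)]

/-- Under the balanced-design assumption `n_{1p} = n_{2p} = n/(2P)` for all `p`, the
pair-clustered variance estimator of the difference-in-means estimator equals the empirical
variance of the within-pair estimators: `V̂_pair(τ̂) = (1/P²) Σ_p (τ̂_p − τ̂)²`. -/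
theorem pair_clustered_variance_eq_empirical_variance
    (P : ℕ) (hP : 1 ≤ P)
    (n : Fin P → Fin 2 → ℕ) (hn : ∀ p g, 1 ≤ n p g)
    (hbal : ∀ p g, n p g * (2 * P) = ∑ p' : Fin P, ∑ g' : Fin 2, n p' g')
    (W : Fin P → Fin 2 → ℝ)
    (hW01 : ∀ p g, W p g = 0 ∨ W p g = 1)
    (hWpair : ∀ p, W p 0 + W p 1 = 1)
    (Y : (p : Fin P) → (g : Fin 2) → Fin (n p g) → ℝ)
    (N T C Wbar Ybar τhat : ℝ)
    (hN : N = ∑ p : Fin P, ∑ g : Fin 2, (n p g : ℝ))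
    (hT : T = ∑ p : Fin P, ∑ g : Fin 2, (n p g : ℝ) * W p g)
    (hC : C = ∑ p : Fin P, ∑ g : Fin 2, (n p g : ℝ) * (1 - W p g))
    (hWbar : Wbar = T / N)
    (hYbar : Ybar = (∑ p : Fin P, ∑ g : Fin 2, ∑ i : Fin (n p g), Y p g i) / N)
    (hτ : τhat = (∑ p : Fin P, ∑ g : Fin 2, ∑ i : Fin (n p g), W p g * Y p g i) / T
        - (∑ p : Fin P, ∑ g : Fin 2, ∑ i : Fin (n p g), (1 - W p g) * Y p g i) / C)
    (ε : (p : Fin P) → (g : Fin 2) → Fin (n p g) → ℝ)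
    (hε : ∀ p g i, ε p g i = Y p g i - Ybar - τhat * (W p g - Wbar))
    (Vpair : ℝ)
    (hVpair : Vpair = (∑ p : Fin P,
        (∑ g : Fin 2, ∑ i : Fin (n p g), (W p g - Wbar) * ε p g i) ^ 2)
        / (∑ p : Fin P, ∑ g : Fin 2, ∑ i : Fin (n p g), (W p g - Wbar) ^ 2) ^ 2)
    (np τp : Fin P → ℝ)
    (hnp : ∀ p, np p = (n p 0 : ℝ) + (n p 1 : ℝ))
    (hτp : ∀ p, τp p = (2 / np p) * ∑ g : Fin 2,
        (2 * W p g - 1) * ∑ i : Fin (n p g), Y p g i) :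
    Vpair = (∑ p : Fin P, (τp p - τhat) ^ 2) / P ^ 2 :=
  pair_clustered_variance_eq_empirical_variance_general P hP n hn hbal W hW01 hWpair Y N T Wbar Ybar
    τhat hN hT hWbar ε hε Vpair hVpair np τp hnp hτp
end

section
/- E[V̂_pair] = (1 − 1/P)·Var(τ̂) + (1/P²)Σ_{p=1}^P (τ_p − τ)². Consequently E[(P/(P−1))·V̂_pair] ≥ Var(τ̂), with equality when τ_p = τ for all p (constant average treatment effect across pairs). -/
/-! Expanding `Σ_p (τ̂_p − τ̂)² = Σ_p τ̂_p² − P τ̂²` and taking expectations with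
`E[Y²] = Var Y + (E Y)²` splits `P² E[V̂_pair]` into the variance part `Σ_p Var τ̂_p − P Var τ̂`
plus the same quadratic expression `Σ_p (τ_p − τ)²` in the means. Independence turns
`Σ_p Var τ̂_p` into `P² Var τ̂`, so the rescaled estimator `P/(P − 1) V̂_pair` overestimates
`Var τ̂` by exactly `Σ_p (τ_p − τ)² / (P (P − 1)) ≥ 0`. -/

open Finset MeasureTheory ProbabilityTheory

theorem sum_sub_mean_sq {ι : Type*} [Fintype ι] (x : ι → ℝ) :
    ∑ i, (x i - (∑ j, x j) / Fintype.card ι) ^ 2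
      = ∑ i, x i ^ 2 - Fintype.card ι * ((∑ j, x j) / Fintype.card ι) ^ 2 := by
  rcases isEmpty_or_nonempty ι with hι | hι
  · simp
  have hn : (Fintype.card ι : ℝ) ≠ 0 := by positivity
  simp only [sub_sq, sum_add_distrib, sum_sub_distrib, ← sum_mul, ← mul_sum, sum_const, card_univ,
    nsmul_eq_mul]
  field_simp
  ring

section

variable {Ω ι : Type*} [MeasurableSpace Ω] {μ : Measure Ω} [Fintype ι] {X : ι → Ω → ℝ}

theorem memLp_mean (hX : ∀ i, MemLp (X i) 2 μ) :
    MemLp (fun ω => (∑ i, X i ω) / Fintype.card ι) 2 μ := by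
  simp_rw [div_eq_inv_mul]
  exact (memLp_finsetSum _ fun i _ => hX i).const_mul _

theorem integral_mean (hX : ∀ i, Integrable (X i) μ) :
    ∫ ω, (∑ i, X i ω) / Fintype.card ι ∂μ = (∑ i, ∫ ω, X i ω ∂μ) / Fintype.card ι := by
  rw [integral_div, integral_finsetSum _ fun i _ => hX i]

theorem IndepFun.variance_mean (hX : ∀ i, MemLp (X i) 2 μ)
    (hindep : Pairwise fun i j => X i ⟂ᵢ[μ] X j) :
    variance (fun ω => (∑ i, X i ω) / Fintype.card ι) μ
      = (∑ i, variance (X i) μ) / Fintype.card ι ^ 2 := by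
  have hmean : (fun ω => (∑ i, X i ω) / Fintype.card ι)
      = fun ω => (Fintype.card ι : ℝ)⁻¹ * (∑ i, X i) ω := by
    funext ω
    rw [Finset.sum_apply, div_eq_inv_mul]
  rw [hmean, variance_const_mul, IndepFun.variance_sum (fun i _ => hX i)
    fun i _ j _ hij => hindep hij]
  field_simp

variable [IsProbabilityMeasure μ]

theorem integral_sq_eq_variance_add_sq {Y : Ω → ℝ} (hY : MemLp Y 2 μ) :
    ∫ ω, Y ω ^ 2 ∂μ = variance Y μ + (∫ ω, Y ω ∂μ) ^ 2 := by
  rw [variance_eq_sub hY]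
  simp

theorem integral_sum_sub_mean_sq (hX : ∀ i, MemLp (X i) 2 μ) :
    ∫ ω, ∑ i, (X i ω - (∑ j, X j ω) / Fintype.card ι) ^ 2 ∂μ
      = ∑ i, variance (X i) μ
          - Fintype.card ι * variance (fun ω => (∑ j, X j ω) / Fintype.card ι) μ
        + ∑ i, (∫ ω, X i ω ∂μ - (∑ j, ∫ ω, X j ω ∂μ) / Fintype.card ι) ^ 2 := by
  simp_rw [sum_sub_mean_sq]
  rw [integral_sub (integrable_finsetSum _ fun i _ => (hX i).integrable_sq)
      ((memLp_mean hX).integrable_sq.const_mul _),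
    integral_finsetSum _ fun i _ => (hX i).integrable_sq, integral_const_mul]
  simp_rw [integral_sq_eq_variance_add_sq (hX _), integral_sq_eq_variance_add_sq (memLp_mean hX),
    integral_mean fun i => (hX i).integrable one_le_two, sum_add_distrib]
  ring

end

theorem expectation_pair_clustered_variance_estimator_general
    {Ω : Type*} [MeasureSpace Ω] [IsProbabilityMeasure (ℙ : Measure Ω)]
    (P : ℕ) (hP : 2 ≤ P)
    (τhat : Fin P → Ω → ℝ)
    (hindep : iIndepFun τhat ℙ)
    (hL2 : ∀ p, MemLp (τhat p) 2 ℙ)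
    (τp : Fin P → ℝ) (hτp : ∀ p, τp p = ∫ ω, τhat p ω)
    (τ : ℝ) (hτ : τ = (∑ p : Fin P, τp p) / P)
    (τbar : Ω → ℝ) (hτbar : ∀ ω, τbar ω = (∑ p : Fin P, τhat p ω) / P)
    (Vpair : Ω → ℝ)
    (hVpair : ∀ ω, Vpair ω = (∑ p : Fin P, (τhat p ω - τbar ω) ^ 2) / (P : ℝ) ^ 2) :
    (∫ ω, Vpair ω)
      = (1 - 1 / (P : ℝ)) * variance τbar ℙ + (∑ p : Fin P, (τp p - τ) ^ 2) / (P : ℝ) ^ 2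
    ∧ variance τbar ℙ ≤ ((P : ℝ) / ((P : ℝ) - 1)) * ∫ ω, Vpair ω
    ∧ ((∀ p, τp p = τ) →
        ((P : ℝ) / ((P : ℝ) - 1)) * (∫ ω, Vpair ω) = variance τbar ℙ) := by
  have hvar_mean := IndepFun.variance_mean hL2 fun p q hpq => hindep.indepFun hpq
  have hcentred := integral_sum_sub_mean_sq hL2
  simp only [Fintype.card_fin, ← hτbar, ← hτp, ← hτ] at hvar_mean hcentred
  have hP1 : (0 : ℝ) < P - 1 := by
    have : (2 : ℝ) ≤ P := by exact_mod_cast hP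
    linarith
  have hE : ∫ ω, Vpair ω
      = ((P ^ 2 - P) * variance τbar ℙ + ∑ p, (τp p - τ) ^ 2) / (P : ℝ) ^ 2 := by
    simp_rw [hVpair, integral_div, hcentred, hvar_mean]
    field_simp
  have hunbiased : ((P : ℝ) / ((P : ℝ) - 1)) * ∫ ω, Vpair ω
      = variance τbar ℙ + (∑ p, (τp p - τ) ^ 2) / (P * (P - 1)) := by
    rw [hE]
    field_simp
  refine ⟨?_, ?_, fun hconst => ?_⟩
  · rw [hE]
    field_simp
  · rw [hunbiased]
    exact le_add_of_nonneg_right (by positivity)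
  · simp [hunbiased, hconst]

/-- For `P ≥ 2` independent square-integrable within-pair estimators `τ̂_p`,
`E[V̂_pair] = (1 − 1/P) Var(τ̂) + (1/P²) Σ_p (τ_p − τ)²`; consequently
`E[(P/(P−1)) V̂_pair] ≥ Var(τ̂)`, with equality when `τ_p = τ` for all `p`. -/
theorem expectation_pair_clustered_variance_estimator
    {Ω : Type*} [MeasureSpace Ω] [IsProbabilityMeasure (ℙ : Measure Ω)]
    (P : ℕ) (hP : 2 ≤ P)
    (τhat : Fin P → Ω → ℝ)
    (hmeas : ∀ p, Measurable (τhat p))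
    (hindep : iIndepFun τhat ℙ)
    (hL2 : ∀ p, MemLp (τhat p) 2 ℙ)
    (τp : Fin P → ℝ) (hτp : ∀ p, τp p = ∫ ω, τhat p ω)
    (τ : ℝ) (hτ : τ = (∑ p : Fin P, τp p) / P)
    (τbar : Ω → ℝ) (hτbar : ∀ ω, τbar ω = (∑ p : Fin P, τhat p ω) / P)
    (Vpair : Ω → ℝ)
    (hVpair : ∀ ω, Vpair ω = (∑ p : Fin P, (τhat p ω - τbar ω) ^ 2) / (P : ℝ) ^ 2) :
    (∫ ω, Vpair ω)
      = (1 - 1 / (P : ℝ)) * variance τbar ℙ + (∑ p : Fin P, (τp p - τ) ^ 2) / (P : ℝ) ^ 2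
    ∧ variance τbar ℙ ≤ ((P : ℝ) / ((P : ℝ) - 1)) * ∫ ω, Vpair ω
    ∧ ((∀ p, τp p = τ) →
        ((P : ℝ) / ((P : ℝ) - 1)) * (∫ ω, Vpair ω) = variance τbar ℙ) :=
  expectation_pair_clustered_variance_estimator_general P hP τhat hindep hL2 τp hτp τ hτ τbar hτbar
    Vpair hVpair
end

section
/- If n_{1p} = n_{2p} for every pair p, then the pair-clustered variance estimator of the fixed-effects estimator equals twice the unit-clustered one: V̂_pair(τ̂_fe) = 2·V̂_unit(τ̂_fe). -/
/-!
In a balanced pair the treated share `W̄_p` is `1/2`, so the two units of the pair carry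
opposite centred treatments `±(W_{1p} - 1/2)`. The within-pair residuals of the
fixed-effects regression sum to zero, so the two units also carry opposite residual sums.
Hence both unit scores `(W_{gp} - W̄_p) Σ_i u_{igp}` of a pair are equal, say `a`, and the
pair score `2a` contributes `4a² = 2 (a² + a²)` to the pair-clustered numerator.
-/

open Finset

theorem sq_sum_fin_two_of_eq {a : Fin 2 → ℝ} (h : a 0 = a 1) :
    (∑ g, a g) ^ 2 = 2 * ∑ g, a g ^ 2 := by
  rw [Fin.sum_univ_two, Fin.sum_univ_two, h]
  ring

theorem balanced_weighted_mean_eq_half {m a b : ℝ} (hm : m ≠ 0) (hab : a + b = 1) :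
    (m * a + m * b) / (m + m) = 1 / 2 := by
  rw [← mul_add, hab]
  field_simp
  ring

theorem sum_sum_demeaned_residual_eq_zero {ι : Type*} [Fintype ι] {m : ι → ℕ}
    (hm : (∑ g, (m g : ℝ)) ≠ 0) (Y : (g : ι) → Fin (m g) → ℝ) (W : ι → ℝ) (τ : ℝ) :
    ∑ g, ∑ i : Fin (m g),
      (Y g i - (∑ g, ∑ i, Y g i) / ∑ g, (m g : ℝ)
        - τ * (W g - (∑ g, (m g : ℝ) * W g) / ∑ g, (m g : ℝ))) = 0 := by
  simp only [sum_sub_distrib, sum_const, card_univ, Fintype.card_fin, nsmul_eq_mul,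
    ← sum_mul, mul_sub]
  rw [mul_div_cancel₀ _ hm, mul_left_comm, mul_div_cancel₀ _ hm, mul_sum]
  simp only [sub_self, mul_left_comm τ]

theorem pair_clustered_eq_twice_unit_clustered_fe_general
    (P : ℕ)
    (n : Fin P → Fin 2 → ℕ) (hn : ∀ p g, 1 ≤ n p g)
    (hbal : ∀ p, n p 0 = n p 1)
    (W : Fin P → Fin 2 → ℝ)
    (hWpair : ∀ p, W p 0 + W p 1 = 1)
    (Y : (p : Fin P) → (g : Fin 2) → Fin (n p g) → ℝ)
    (τfe : ℝ)
    (Tp np Wbarp Ybarp : Fin P → ℝ)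
    (hTp : ∀ p, Tp p = ∑ g : Fin 2, (n p g : ℝ) * W p g)
    (hnp : ∀ p, np p = (n p 0 : ℝ) + (n p 1 : ℝ))
    (hWbarp : ∀ p, Wbarp p = Tp p / np p)
    (hYbarp : ∀ p, Ybarp p = (∑ g : Fin 2, ∑ i : Fin (n p g), Y p g i) / np p)
    (u : (p : Fin P) → (g : Fin 2) → Fin (n p g) → ℝ)
    (hu : ∀ p g i, u p g i = Y p g i - Ybarp p - τfe * (W p g - Wbarp p))
    (Vpairfe Vunitfe : ℝ)
    (hVpairfe : Vpairfe
        = (∑ p : Fin P, (∑ g : Fin 2, ∑ i : Fin (n p g), (W p g - Wbarp p) * u p g i) ^ 2)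
        / (∑ p : Fin P, ∑ g : Fin 2, ∑ i : Fin (n p g), (W p g - Wbarp p) ^ 2) ^ 2)
    (hVunitfe : Vunitfe
        = (∑ p : Fin P, ∑ g : Fin 2, ((W p g - Wbarp p) * ∑ i : Fin (n p g), u p g i) ^ 2)
        / (∑ p : Fin P, ∑ g : Fin 2, ∑ i : Fin (n p g), (W p g - Wbarp p) ^ 2) ^ 2) :
    Vpairfe = 2 * Vunitfe := by
  have hnp_sum : ∀ p, np p = ∑ g, (n p g : ℝ) := fun p => by rw [hnp, Fin.sum_univ_two]
  have hnp_ne : ∀ p, np p ≠ 0 := fun p => by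
    have := hn p 0
    rw [hnp]
    positivity
  have hWbar : ∀ p, Wbarp p = 1 / 2 := fun p => by
    rw [hWbarp, hTp, hnp, Fin.sum_univ_two, hbal]
    exact balanced_weighted_mean_eq_half (by have := hn p 1; positivity) (hWpair p)
  have hu_sum : ∀ p, ∑ g, ∑ i, u p g i = 0 := fun p => by
    simp only [hu, hYbarp, hWbarp, hTp, hnp_sum]
    exact sum_sum_demeaned_residual_eq_zero (hnp_sum p ▸ hnp_ne p) _ _ _
  have hscore : ∀ p, (W p 0 - Wbarp p) * ∑ i, u p 0 i = (W p 1 - Wbarp p) * ∑ i, u p 1 i :=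
    fun p => by
      have hW1 : W p 1 = 1 - W p 0 := by linarith [hWpair p]
      have hu1 : ∑ i, u p 1 i = -∑ i, u p 0 i := by
        linarith [Fin.sum_univ_two (fun g => ∑ i, u p g i) ▸ hu_sum p]
      rw [hW1, hu1, hWbar]
      ring
  rw [hVpairfe, hVunitfe, ← mul_div_assoc, mul_sum]
  congr 1
  refine sum_congr rfl fun p _ => ?_
  simp only [← mul_sum]
  exact sq_sum_fin_two_of_eq (hscore p)

/-- If the two randomization units in each pair have the same number of observations
(`n_{1p} = n_{2p}` for every `p`), then the pair-clustered variance estimator of the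
fixed-effects estimator equals twice the unit-clustered one:
`V̂_pair(τ̂_fe) = 2 V̂_unit(τ̂_fe)`. -/
theorem pair_clustered_eq_twice_unit_clustered_fe
    (P : ℕ) (hP : 1 ≤ P)
    (n : Fin P → Fin 2 → ℕ) (hn : ∀ p g, 1 ≤ n p g)
    (hbal : ∀ p, n p 0 = n p 1)
    (W : Fin P → Fin 2 → ℝ)
    (hW01 : ∀ p g, W p g = 0 ∨ W p g = 1)
    (hWpair : ∀ p, W p 0 + W p 1 = 1)
    (Y : (p : Fin P) → (g : Fin 2) → Fin (n p g) → ℝ)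
    (w : Fin P → ℝ)
    (hw : ∀ p, w p = (1 / (n p 0 : ℝ) + 1 / (n p 1 : ℝ))⁻¹
        / ∑ p' : Fin P, (1 / (n p' 0 : ℝ) + 1 / (n p' 1 : ℝ))⁻¹)
    (τfe : ℝ)
    (hτfe : τfe = ∑ p : Fin P, w p * ∑ g : Fin 2,
        (2 * W p g - 1) * (∑ i : Fin (n p g), Y p g i) / (n p g : ℝ))
    (Tp np Wbarp Ybarp : Fin P → ℝ)
    (hTp : ∀ p, Tp p = ∑ g : Fin 2, (n p g : ℝ) * W p g)
    (hnp : ∀ p, np p = (n p 0 : ℝ) + (n p 1 : ℝ))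
    (hWbarp : ∀ p, Wbarp p = Tp p / np p)
    (hYbarp : ∀ p, Ybarp p = (∑ g : Fin 2, ∑ i : Fin (n p g), Y p g i) / np p)
    (u : (p : Fin P) → (g : Fin 2) → Fin (n p g) → ℝ)
    (hu : ∀ p g i, u p g i = Y p g i - Ybarp p - τfe * (W p g - Wbarp p))
    (SETfe : Fin P → ℝ)
    (hSETfe : ∀ p, SETfe p = ∑ g : Fin 2, ∑ i : Fin (n p g), W p g * u p g i)
    (Vpairfe Vunitfe : ℝ)
    (hVpairfe : Vpairfe
        = (∑ p : Fin P, (∑ g : Fin 2, ∑ i : Fin (n p g), (W p g - Wbarp p) * u p g i) ^ 2)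
        / (∑ p : Fin P, ∑ g : Fin 2, ∑ i : Fin (n p g), (W p g - Wbarp p) ^ 2) ^ 2)
    (hVunitfe : Vunitfe
        = (∑ p : Fin P, ∑ g : Fin 2, ((W p g - Wbarp p) * ∑ i : Fin (n p g), u p g i) ^ 2)
        / (∑ p : Fin P, ∑ g : Fin 2, ∑ i : Fin (n p g), (W p g - Wbarp p) ^ 2) ^ 2) :
    Vpairfe = 2 * Vunitfe :=
  pair_clustered_eq_twice_unit_clustered_fe_general P n hn hbal W hWpair Y τfe Tp np Wbarp Ybarp hTp
    hnp hWbarp hYbarp u hu Vpairfe Vunitfe hVpairfe hVunitfe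
end

section
/- Under the balanced-design assumption n_{1p} = n_{2p} = n/(2P) for all p, the three clustered variance estimators satisfy V̂_pair(τ̂) = V̂_pair(τ̂_fe) = 2·V̂_unit(τ̂_fe). -/
/-!
In a balanced design every unit has the same number `m` of observations. Then the overall and
the within-pair treated fractions are both `1/2` and all pair weights `ω_p` equal `1/P`, so
`τ̂ = τ̂_fe`. The centred treatments `W_{gp} - 1/2` of the two units of a pair sum to zero, hence
the pair score `∑_g (W_{gp} - 1/2) ∑_i (Y_{igp} - a - τ (W_{gp} - 1/2))` does not depend on the
intercept `a`: taking `a = Ȳ` or `a = Ȳ_p` gives the same score, and `V̂_pair(τ̂) = V̂_pair(τ̂_fe)`.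
Finally the fixed-effects residuals sum to zero over each pair, so the two unit scores of a pair
are equal and the squared pair score is twice the sum of the squared unit scores.
-/

open Finset

lemma exists_eq_const_of_mul_eq {ι κ : Type*} [Nonempty ι] [Nonempty κ] {n : ι → κ → ℕ}
    {k s : ℕ} (hk : 0 < k) (h : ∀ i j, n i j * k = s) : ∃ m, n = fun _ _ => m := by
  obtain ⟨i₀⟩ := ‹Nonempty ι›
  obtain ⟨j₀⟩ := ‹Nonempty κ›
  exact ⟨n i₀ j₀, funext₂ fun i j => Nat.eq_of_mul_eq_mul_right hk ((h i j).trans (h i₀ j₀).symm)⟩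

section CommRing

variable {R : Type*} [CommRing R]

lemma sum_fin_two_mul_of_add_eq_one {W : Fin 2 → R} (hW : W 0 + W 1 = 1) (c : R) :
    ∑ g, c * W g = c := by
  rw [Fin.sum_univ_two, ← mul_add, hW, mul_one]

lemma sum_fin_two_mul_one_sub_of_add_eq_one {W : Fin 2 → R} (hW : W 0 + W 1 = 1) (c : R) :
    ∑ g, c * (1 - W g) = c := by
  rw [Fin.sum_univ_two]
  linear_combination -c * hW

lemma sum_fin_two_sum_mul_residual {m : ℕ} {d : Fin 2 → R} (hd : d 0 + d 1 = 0)
    (Y : Fin 2 → Fin m → R) (a τ : R) :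
    ∑ g, ∑ i, d g * (Y g i - a - τ * d g) = ∑ g, d g * ∑ i, Y g i - m * τ * ∑ g, d g ^ 2 := by
  simp only [← mul_sum, sum_sub_distrib, sum_const, card_univ, Fintype.card_fin, nsmul_eq_mul,
    Fin.sum_univ_two]
  linear_combination (-m * a) * hd

lemma sq_sum_fin_two_mul_of_add_eq_zero {d x : Fin 2 → R} (hd : d 0 + d 1 = 0)
    (hx : x 0 + x 1 = 0) : (∑ g, d g * x g) ^ 2 = 2 * ∑ g, (d g * x g) ^ 2 := by
  rw [Fin.sum_univ_two, Fin.sum_univ_two, eq_neg_of_add_eq_zero_right hd,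
    eq_neg_of_add_eq_zero_right hx]
  ring

end CommRing

lemma sum_fin_two_sum_residual_eq_zero {K : Type*} [Field K] {m : ℕ} (hm : (m + m : K) ≠ 0)
    {d : Fin 2 → K} (hd : d 0 + d 1 = 0) (Y : Fin 2 → Fin m → K) (τ : K) :
    ∑ g, ∑ i, (Y g i - (∑ g, ∑ i, Y g i) / (m + m) - τ * d g) = 0 := by
  simp only [sum_sub_distrib, sum_const, card_univ, Fintype.card_fin, nsmul_eq_mul,
    Fin.sum_univ_two]
  linear_combination -div_mul_cancel₀ (∑ i, Y 0 i + ∑ i, Y 1 i) hm - (m * τ) * hd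

section BalancedDesign

variable {P m : ℕ} {W : Fin P → Fin 2 → ℝ}

lemma treated_fraction_eq_half (hP : P ≠ 0) (hm : m ≠ 0) (hW : ∀ p, W p 0 + W p 1 = 1) :
    (∑ p, ∑ g, (m : ℝ) * W p g) / ∑ _p : Fin P, ∑ _g : Fin 2, (m : ℝ) = 1 / 2 := by
  simp only [sum_fin_two_mul_of_add_eq_one (hW _), sum_const, card_univ, Fintype.card_fin,
    nsmul_eq_mul]
  field_simp
  ring

lemma pair_treated_fraction_eq_half (hm : m ≠ 0) {w : Fin 2 → ℝ} (hw : w 0 + w 1 = 1) :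
    (∑ g, (m : ℝ) * w g) / (m + m) = 1 / 2 := by
  rw [sum_fin_two_mul_of_add_eq_one hw]
  field_simp
  ring

lemma diff_in_means_eq_pair_fixed_effects (hP : P ≠ 0) (hm : m ≠ 0)
    (hW : ∀ p, W p 0 + W p 1 = 1) (Y : Fin P → Fin 2 → Fin m → ℝ) :
    (∑ p, ∑ g, ∑ i, W p g * Y p g i) / (∑ p, ∑ g, (m : ℝ) * W p g)
      - (∑ p, ∑ g, ∑ i, (1 - W p g) * Y p g i) / (∑ p, ∑ g, (m : ℝ) * (1 - W p g))
      = ∑ p, (1 / (m : ℝ) + 1 / m)⁻¹ / (∑ _p : Fin P, (1 / (m : ℝ) + 1 / m)⁻¹)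
          * ∑ g, (2 * W p g - 1) * (∑ i, Y p g i) / m := by
  simp only [sum_fin_two_mul_of_add_eq_one (hW _), sum_fin_two_mul_one_sub_of_add_eq_one (hW _),
    sum_const, card_univ, Fintype.card_fin, nsmul_eq_mul, div_sub_div_same, ← sum_sub_distrib,
    sum_div, mul_sum]
  refine sum_congr rfl fun p _ => sum_congr rfl fun g _ => sum_congr rfl fun i _ => ?_
  field_simp
  ring

end BalancedDesign

theorem clustered_variance_estimators_balanced_design_general
    (P : ℕ) (hP : 1 ≤ P)
    (n : Fin P → Fin 2 → ℕ) (hn : ∀ p g, 1 ≤ n p g)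
    (hbal : ∀ p g, n p g * (2 * P) = ∑ p' : Fin P, ∑ g' : Fin 2, n p' g')
    (W : Fin P → Fin 2 → ℝ)
    (hWpair : ∀ p, W p 0 + W p 1 = 1)
    (Y : (p : Fin P) → (g : Fin 2) → Fin (n p g) → ℝ)
    (N T C Wbar Ybar τhat : ℝ)
    (hN : N = ∑ p : Fin P, ∑ g : Fin 2, (n p g : ℝ))
    (hT : T = ∑ p : Fin P, ∑ g : Fin 2, (n p g : ℝ) * W p g)
    (hC : C = ∑ p : Fin P, ∑ g : Fin 2, (n p g : ℝ) * (1 - W p g))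
    (hWbar : Wbar = T / N)
    (hτ : τhat = (∑ p : Fin P, ∑ g : Fin 2, ∑ i : Fin (n p g), W p g * Y p g i) / T
        - (∑ p : Fin P, ∑ g : Fin 2, ∑ i : Fin (n p g), (1 - W p g) * Y p g i) / C)
    (ε : (p : Fin P) → (g : Fin 2) → Fin (n p g) → ℝ)
    (hε : ∀ p g i, ε p g i = Y p g i - Ybar - τhat * (W p g - Wbar))
    (Vpair : ℝ)
    (hVpair : Vpair = (∑ p : Fin P,
        (∑ g : Fin 2, ∑ i : Fin (n p g), (W p g - Wbar) * ε p g i) ^ 2)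
        / (∑ p : Fin P, ∑ g : Fin 2, ∑ i : Fin (n p g), (W p g - Wbar) ^ 2) ^ 2)
    (w : Fin P → ℝ)
    (hw : ∀ p, w p = (1 / (n p 0 : ℝ) + 1 / (n p 1 : ℝ))⁻¹
        / ∑ p' : Fin P, (1 / (n p' 0 : ℝ) + 1 / (n p' 1 : ℝ))⁻¹)
    (τfe : ℝ)
    (hτfe : τfe = ∑ p : Fin P, w p * ∑ g : Fin 2,
        (2 * W p g - 1) * (∑ i : Fin (n p g), Y p g i) / (n p g : ℝ))
    (Tp np Wbarp Ybarp : Fin P → ℝ)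
    (hTp : ∀ p, Tp p = ∑ g : Fin 2, (n p g : ℝ) * W p g)
    (hnp : ∀ p, np p = (n p 0 : ℝ) + (n p 1 : ℝ))
    (hWbarp : ∀ p, Wbarp p = Tp p / np p)
    (hYbarp : ∀ p, Ybarp p = (∑ g : Fin 2, ∑ i : Fin (n p g), Y p g i) / np p)
    (u : (p : Fin P) → (g : Fin 2) → Fin (n p g) → ℝ)
    (hu : ∀ p g i, u p g i = Y p g i - Ybarp p - τfe * (W p g - Wbarp p))
    (Vpairfe Vunitfe : ℝ)
    (hVpairfe : Vpairfe
        = (∑ p : Fin P, (∑ g : Fin 2, ∑ i : Fin (n p g), (W p g - Wbarp p) * u p g i) ^ 2)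
        / (∑ p : Fin P, ∑ g : Fin 2, ∑ i : Fin (n p g), (W p g - Wbarp p) ^ 2) ^ 2)
    (hVunitfe : Vunitfe
        = (∑ p : Fin P, ∑ g : Fin 2, ((W p g - Wbarp p) * ∑ i : Fin (n p g), u p g i) ^ 2)
        / (∑ p : Fin P, ∑ g : Fin 2, ∑ i : Fin (n p g), (W p g - Wbarp p) ^ 2) ^ 2) :
    Vpair = Vpairfe ∧ Vpairfe = 2 * Vunitfe := by
  have : NeZero P := ⟨by omega⟩
  obtain ⟨m, rfl⟩ := exists_eq_const_of_mul_eq (ι := Fin P) (κ := Fin 2) (by omega) hbal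
  beta_reduce at *
  have hm : m ≠ 0 := by have := hn ⟨0, hP⟩ 0; omega
  have hd : ∀ p, (W p 0 - 1 / 2) + (W p 1 - 1 / 2) = 0 := fun p => by linarith [hWpair p]
  have hWbar_eq : Wbar = 1 / 2 := by
    rw [hWbar, hT, hN, treated_fraction_eq_half (by omega) hm hWpair]
  have hWbarp_eq : ∀ p, Wbarp p = 1 / 2 := fun p => by
    rw [hWbarp, hTp, hnp, pair_treated_fraction_eq_half hm (hWpair p)]
  have hτeq : τhat = τfe := by
    rw [hτ, hτfe, hT, hC, diff_in_means_eq_pair_fixed_effects (by omega) hm hWpair]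
    simp only [hw]
  have hscore : ∀ p, ∑ g, ∑ i, (W p g - Wbar) * ε p g i
      = ∑ g, ∑ i, (W p g - Wbarp p) * u p g i := fun p => by
    have h := sum_fin_two_sum_mul_residual (d := fun g => W p g - 1 / 2) (hd p) (Y p)
    simp only [hε, hu, hWbar_eq, hWbarp_eq, hτeq]
    exact (h Ybar τfe).trans (h (Ybarp p) τfe).symm
  have hunit : ∀ p, (∑ g, ∑ i, (W p g - Wbarp p) * u p g i) ^ 2
      = 2 * ∑ g, ((W p g - Wbarp p) * ∑ i, u p g i) ^ 2 := fun p => by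
    simp only [← mul_sum]
    refine sq_sum_fin_two_mul_of_add_eq_zero (by simpa only [hWbarp_eq] using hd p) ?_
    have := sum_fin_two_sum_residual_eq_zero (by positivity) (d := fun g => W p g - 1 / 2) (hd p)
      (Y p) τfe
    simpa only [hu, hWbarp_eq, hYbarp, hnp, Fin.sum_univ_two] using this
  refine ⟨?_, ?_⟩
  · simp only [hVpair, hVpairfe, hscore]
    simp only [hWbar_eq, hWbarp_eq]
  · rw [hVpairfe, hVunitfe, sum_congr rfl fun p _ => hunit p, ← mul_sum, mul_div_assoc]

/-- Under the balanced-design assumption `n_{1p} = n_{2p} = n/(2P)` for all `p`, the three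
clustered variance estimators satisfy `V̂_pair(τ̂) = V̂_pair(τ̂_fe) = 2 V̂_unit(τ̂_fe)`. -/
theorem clustered_variance_estimators_balanced_design
    (P : ℕ) (hP : 1 ≤ P)
    (n : Fin P → Fin 2 → ℕ) (hn : ∀ p g, 1 ≤ n p g)
    (hbal : ∀ p g, n p g * (2 * P) = ∑ p' : Fin P, ∑ g' : Fin 2, n p' g')
    (W : Fin P → Fin 2 → ℝ)
    (hW01 : ∀ p g, W p g = 0 ∨ W p g = 1)
    (hWpair : ∀ p, W p 0 + W p 1 = 1)
    (Y : (p : Fin P) → (g : Fin 2) → Fin (n p g) → ℝ)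
    (N T C Wbar Ybar τhat : ℝ)
    (hN : N = ∑ p : Fin P, ∑ g : Fin 2, (n p g : ℝ))
    (hT : T = ∑ p : Fin P, ∑ g : Fin 2, (n p g : ℝ) * W p g)
    (hC : C = ∑ p : Fin P, ∑ g : Fin 2, (n p g : ℝ) * (1 - W p g))
    (hWbar : Wbar = T / N)
    (hYbar : Ybar = (∑ p : Fin P, ∑ g : Fin 2, ∑ i : Fin (n p g), Y p g i) / N)
    (hτ : τhat = (∑ p : Fin P, ∑ g : Fin 2, ∑ i : Fin (n p g), W p g * Y p g i) / T
        - (∑ p : Fin P, ∑ g : Fin 2, ∑ i : Fin (n p g), (1 - W p g) * Y p g i) / C)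
    (ε : (p : Fin P) → (g : Fin 2) → Fin (n p g) → ℝ)
    (hε : ∀ p g i, ε p g i = Y p g i - Ybar - τhat * (W p g - Wbar))
    (Vpair : ℝ)
    (hVpair : Vpair = (∑ p : Fin P,
        (∑ g : Fin 2, ∑ i : Fin (n p g), (W p g - Wbar) * ε p g i) ^ 2)
        / (∑ p : Fin P, ∑ g : Fin 2, ∑ i : Fin (n p g), (W p g - Wbar) ^ 2) ^ 2)
    (w : Fin P → ℝ)
    (hw : ∀ p, w p = (1 / (n p 0 : ℝ) + 1 / (n p 1 : ℝ))⁻¹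
        / ∑ p' : Fin P, (1 / (n p' 0 : ℝ) + 1 / (n p' 1 : ℝ))⁻¹)
    (τfe : ℝ)
    (hτfe : τfe = ∑ p : Fin P, w p * ∑ g : Fin 2,
        (2 * W p g - 1) * (∑ i : Fin (n p g), Y p g i) / (n p g : ℝ))
    (Tp np Wbarp Ybarp : Fin P → ℝ)
    (hTp : ∀ p, Tp p = ∑ g : Fin 2, (n p g : ℝ) * W p g)
    (hnp : ∀ p, np p = (n p 0 : ℝ) + (n p 1 : ℝ))
    (hWbarp : ∀ p, Wbarp p = Tp p / np p)
    (hYbarp : ∀ p, Ybarp p = (∑ g : Fin 2, ∑ i : Fin (n p g), Y p g i) / np p)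
    (u : (p : Fin P) → (g : Fin 2) → Fin (n p g) → ℝ)
    (hu : ∀ p g i, u p g i = Y p g i - Ybarp p - τfe * (W p g - Wbarp p))
    (Vpairfe Vunitfe : ℝ)
    (hVpairfe : Vpairfe
        = (∑ p : Fin P, (∑ g : Fin 2, ∑ i : Fin (n p g), (W p g - Wbarp p) * u p g i) ^ 2)
        / (∑ p : Fin P, ∑ g : Fin 2, ∑ i : Fin (n p g), (W p g - Wbarp p) ^ 2) ^ 2)
    (hVunitfe : Vunitfe
        = (∑ p : Fin P, ∑ g : Fin 2, ((W p g - Wbarp p) * ∑ i : Fin (n p g), u p g i) ^ 2)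
        / (∑ p : Fin P, ∑ g : Fin 2, ∑ i : Fin (n p g), (W p g - Wbarp p) ^ 2) ^ 2) :
    Vpair = Vpairfe ∧ Vpairfe = 2 * Vunitfe :=
  clustered_variance_estimators_balanced_design_general P hP n hn hbal W hWpair Y N T C Wbar Ybar
    τhat hN hT hC hWbar hτ ε hε Vpair hVpair w hw τfe hτfe Tp np Wbarp Ybarp hTp hnp hWbarp hYbarp u
    hu Vpairfe Vunitfe hVpairfe hVunitfe
end

section
/- Under the balanced-design assumption n_{1p} = n_{2p} = n/(2P) for all p, the difference of the two variance estimators of the difference-in-means estimator satisfies V̂_unit(τ̂) − V̂_pair(τ̂) = (2/P²)Σ_{p=1}^P Ŷ_p(1)Ŷ_p(0) − (2/P)Ŷ(1)Ŷ(0), where Ȳ_{gp} = (1/n_{gp})Σ_i Y_{igp}, Ŷ_p(1) = Σ_g W_{gp}Ȳ_{gp}, Ŷ_p(0) = Σ_g (1−W_{gp})Ȳ_{gp}, and Ŷ(d) = (1/P)Σ_p Ŷ_p(d) for d = 0,1. -/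
open Finset

/-!
With equal cluster sizes `m`, exactly half of the observations are treated, so `W̄ = 1/2`,
`τ̂ = Ŷ(1) − Ŷ(0)` and `Ȳ = (Ŷ(1) + Ŷ(0))/2`; hence `Ȳ + τ̂ (W − W̄) = W Ŷ(1) + (1 − W) Ŷ(0)`,
and the residual total of a cluster is `m (Ȳ_{gp} − Ŷ(1))` if it is treated and
`m (Ȳ_{gp} − Ŷ(0))` if not. Both estimators have the denominator `(Pm/2)²`; their numerators
differ pair by pair by `x₁² + x₂² − (x₁ + x₂)² = −2 x₁ x₂` with
`x_g = (W_{gp} − 1/2) · (residual total)`. Since `(W_{1p} − 1/2)(W_{2p} − 1/2) = −1/4`, the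
numerators differ by `(m²/2) Σ_p (Ŷ_p(1) − Ŷ(1))(Ŷ_p(0) − Ŷ(0))`, and expanding this sample
covariance gives the formula.
-/

lemma natCast_mul_sum_div_natCast {k : ℕ} (y : Fin k → ℝ) :
    (k : ℝ) * ((∑ i, y i) / k) = ∑ i, y i := by
  simpa [Fintype.expect_eq_sum_div_card] using Fintype.card_mul_expect y

lemma sum_sub_mean_mul_sub_mean {k : ℕ} (a b : Fin k → ℝ) :
    ∑ i, (a i - (∑ j, a j) / k) * (b i - (∑ j, b j) / k)
      = ∑ i, a i * b i - k * ((∑ j, a j) / k * ((∑ j, b j) / k)) := by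
  have ha := natCast_mul_sum_div_natCast a
  have hb := natCast_mul_sum_div_natCast b
  simp only [sub_mul, mul_sub, sum_sub_distrib, ← sum_mul, ← mul_sum, sum_const, card_univ,
    Fintype.card_fin, nsmul_eq_mul]
  linear_combination (∑ j, b j) / k * ha + (∑ j, a j) / k * hb

lemma sum_sq_sub_sq_sum_fin_two (x : Fin 2 → ℝ) :
    ∑ g, x g ^ 2 - (∑ g, x g) ^ 2 = -2 * (x 0 * x 1) := by
  simp only [Fin.sum_univ_two]
  ring

lemma eq_one_zero_or_eq_zero_one {w : Fin 2 → ℝ} (hw : ∀ g, w g = 0 ∨ w g = 1)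
    (hsum : w 0 + w 1 = 1) : w 0 = 1 ∧ w 1 = 0 ∨ w 0 = 0 ∧ w 1 = 1 := by
  rcases hw 0 with h | h
  · exact .inr ⟨h, by linarith⟩
  · exact .inl ⟨h, by linarith⟩

lemma cross_term_of_pair {w : Fin 2 → ℝ} (hw : w 0 = 1 ∧ w 1 = 0 ∨ w 0 = 0 ∧ w 1 = 1)
    (m μ₁ μ₀ : ℝ) (a : Fin 2 → ℝ) :
    (w 0 - 1 / 2) * (m * (a 0 - (w 0 * μ₁ + (1 - w 0) * μ₀)))
        * ((w 1 - 1 / 2) * (m * (a 1 - (w 1 * μ₁ + (1 - w 1) * μ₀))))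
      = -(m ^ 2 / 4) * ((∑ g, w g * a g - μ₁) * (∑ g, (1 - w g) * a g - μ₀)) := by
  rcases hw with ⟨h₀, h₁⟩ | ⟨h₀, h₁⟩ <;> simp only [Fin.sum_univ_two, h₀, h₁] <;> ring

section Pairs

variable {P : ℕ} {n : Fin P → Fin 2 → ℕ}

lemma sum_sum_sq_sub_sum_sq_sum (x : Fin P → Fin 2 → ℝ) (ε : ∀ p g, Fin (n p g) → ℝ) :
    ∑ p, ∑ g, (x p g * ∑ i, ε p g i) ^ 2 - ∑ p, (∑ g, ∑ i, x p g * ε p g i) ^ 2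
      = -2 * ∑ p, (x p 0 * ∑ i, ε p 0 i) * (x p 1 * ∑ i, ε p 1 i) := by
  simp only [← mul_sum, ← sum_sub_distrib, sum_sq_sub_sq_sum_fin_two, mul_assoc]

lemma exists_forall_natCast_eq_of_balanced (hP : 1 ≤ P) (hn : ∀ p g, 1 ≤ n p g)
    (hbal : ∀ p g, n p g * (2 * P) = ∑ p', ∑ g', n p' g') :
    ∃ m : ℝ, m ≠ 0 ∧ ∀ p g, (n p g : ℝ) = m := by
  refine ⟨n ⟨0, hP⟩ 0, by have := hn ⟨0, hP⟩ 0; positivity, fun p g => ?_⟩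
  exact_mod_cast Nat.eq_of_mul_eq_mul_right (by omega) ((hbal p g).trans (hbal _ _).symm)

lemma sum_sum_natCast_mul_of_sum_eq {m : ℝ} (hm : ∀ p g, (n p g : ℝ) = m)
    {f : Fin P → Fin 2 → ℝ} {c : ℝ} (hf : ∀ p, f p 0 + f p 1 = c) :
    ∑ p, ∑ g, (n p g : ℝ) * f p g = c * P * m := by
  simp only [hm, ← mul_sum, Fin.sum_univ_two, hf, sum_const, card_univ, Fintype.card_fin,
    nsmul_eq_mul]
  ring

lemma sum_sum_sum_mul_eq_of_sum_eq {Y : ∀ p g, Fin (n p g) → ℝ} {m : ℝ}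
    {a : Fin P → Fin 2 → ℝ} (hY : ∀ p g, ∑ i, Y p g i = m * a p g)
    {f : Fin P → Fin 2 → ℝ} {b : Fin P → ℝ} (hb : ∀ p, b p = ∑ g, f p g * a p g)
    {μ : ℝ} (hμ : μ = (∑ p, b p) / P) :
    ∑ p, ∑ g, ∑ i, f p g * Y p g i = P * m * μ := by
  rw [hμ, mul_right_comm, natCast_mul_sum_div_natCast]
  simp only [← mul_sum, hY, hb, sum_mul]
  simp only [mul_left_comm, mul_comm]

end Pairs

/-- Under the balanced-design assumption `n_{1p} = n_{2p} = n/(2P)` for all `p`, the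
difference of the unit- and pair-clustered variance estimators of the difference-in-means
estimator satisfies
`V̂_unit(τ̂) − V̂_pair(τ̂) = (2/P²) Σ_p Ŷ_p(1)Ŷ_p(0) − (2/P) Ŷ(1)Ŷ(0)`. -/
theorem diff_unit_pair_clustered_variance_balanced
    (P : ℕ) (hP : 1 ≤ P)
    (n : Fin P → Fin 2 → ℕ) (hn : ∀ p g, 1 ≤ n p g)
    (hbal : ∀ p g, n p g * (2 * P) = ∑ p' : Fin P, ∑ g' : Fin 2, n p' g')
    (W : Fin P → Fin 2 → ℝ)
    (hW01 : ∀ p g, W p g = 0 ∨ W p g = 1)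
    (hWpair : ∀ p, W p 0 + W p 1 = 1)
    (Y : (p : Fin P) → (g : Fin 2) → Fin (n p g) → ℝ)
    (N T C Wbar Ybar τhat : ℝ)
    (hN : N = ∑ p : Fin P, ∑ g : Fin 2, (n p g : ℝ))
    (hT : T = ∑ p : Fin P, ∑ g : Fin 2, (n p g : ℝ) * W p g)
    (hC : C = ∑ p : Fin P, ∑ g : Fin 2, (n p g : ℝ) * (1 - W p g))
    (hWbar : Wbar = T / N)
    (hYbar : Ybar = (∑ p : Fin P, ∑ g : Fin 2, ∑ i : Fin (n p g), Y p g i) / N)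
    (hτ : τhat = (∑ p : Fin P, ∑ g : Fin 2, ∑ i : Fin (n p g), W p g * Y p g i) / T
        - (∑ p : Fin P, ∑ g : Fin 2, ∑ i : Fin (n p g), (1 - W p g) * Y p g i) / C)
    (ε : (p : Fin P) → (g : Fin 2) → Fin (n p g) → ℝ)
    (hε : ∀ p g i, ε p g i = Y p g i - Ybar - τhat * (W p g - Wbar))
    (Vpair Vunit : ℝ)
    (hVpair : Vpair = (∑ p : Fin P,
        (∑ g : Fin 2, ∑ i : Fin (n p g), (W p g - Wbar) * ε p g i) ^ 2)
        / (∑ p : Fin P, ∑ g : Fin 2, ∑ i : Fin (n p g), (W p g - Wbar) ^ 2) ^ 2)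
    (hVunit : Vunit = (∑ p : Fin P, ∑ g : Fin 2,
        ((W p g - Wbar) * ∑ i : Fin (n p g), ε p g i) ^ 2)
        / (∑ p : Fin P, ∑ g : Fin 2, ∑ i : Fin (n p g), (W p g - Wbar) ^ 2) ^ 2)
    (Ybargp : (p : Fin P) → Fin 2 → ℝ)
    (hYbargp : ∀ p g, Ybargp p g = (∑ i : Fin (n p g), Y p g i) / (n p g : ℝ))
    (Yhat1 Yhat0 : Fin P → ℝ)
    (hYhat1 : ∀ p, Yhat1 p = ∑ g : Fin 2, W p g * Ybargp p g)
    (hYhat0 : ∀ p, Yhat0 p = ∑ g : Fin 2, (1 - W p g) * Ybargp p g)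
    (Ybar1 Ybar0 : ℝ)
    (hYbar1 : Ybar1 = (∑ p : Fin P, Yhat1 p) / P)
    (hYbar0 : Ybar0 = (∑ p : Fin P, Yhat0 p) / P) :
    Vunit - Vpair
      = (2 / (P : ℝ) ^ 2) * ∑ p : Fin P, Yhat1 p * Yhat0 p
        - (2 / (P : ℝ)) * (Ybar1 * Ybar0) := by
  have hP0 : (P : ℝ) ≠ 0 := by positivity
  obtain ⟨m, hm0, hm⟩ := exists_forall_natCast_eq_of_balanced hP hn hbal
  have hY : ∀ p g, ∑ i, Y p g i = m * Ybargp p g := fun p g => by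
    rw [hYbargp, ← hm p g, natCast_mul_sum_div_natCast]
  have hT' : T = P * m := by rw [hT, sum_sum_natCast_mul_of_sum_eq hm hWpair, one_mul]
  have hC' : C = P * m := by
    rw [hC, sum_sum_natCast_mul_of_sum_eq hm (c := 1) fun p => by linarith [hWpair p], one_mul]
  have hN' : N = 2 * P * m := by
    simp only [hN, hm, sum_const, card_univ, Fintype.card_fin, nsmul_eq_mul]
    ring
  have hWbar' : Wbar = 1 / 2 := by rw [hWbar, hT', hN']; field_simp
  have h1 := sum_sum_sum_mul_eq_of_sum_eq hY hYhat1 hYbar1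
  have h0 := sum_sum_sum_mul_eq_of_sum_eq hY hYhat0 hYbar0
  have hτ' : τhat = Ybar1 - Ybar0 := by rw [hτ, h1, h0, hT', hC']; field_simp
  have hYbar' : Ybar = (Ybar1 + Ybar0) / 2 := by
    have hsplit : ∑ p, ∑ g, ∑ i, Y p g i
        = ∑ p, ∑ g, ∑ i, W p g * Y p g i + ∑ p, ∑ g, ∑ i, (1 - W p g) * Y p g i := by
      simp only [← sum_add_distrib, ← add_mul, add_sub_cancel, one_mul]
    rw [hYbar, hsplit, h1, h0, hN']
    field_simp
  have hres : ∀ p g,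
      ∑ i, ε p g i = m * (Ybargp p g - (W p g * Ybar1 + (1 - W p g) * Ybar0)) := by
    intro p g
    simp only [hε, sum_sub_distrib, sum_const, card_univ, Fintype.card_fin, nsmul_eq_mul, hm, hY,
      hYbar', hτ', hWbar']
    ring
  have hcases := fun p => eq_one_zero_or_eq_zero_one (hW01 p) (hWpair p)
  have hD : ∑ p, ∑ g, ∑ i : Fin (n p g), (W p g - Wbar) ^ 2 = 1 / 2 * P * m := by
    simp only [sum_const, card_univ, Fintype.card_fin, nsmul_eq_mul]
    refine sum_sum_natCast_mul_of_sum_eq hm fun p => ?_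
    rcases hcases p with ⟨h₀, h₁⟩ | ⟨h₀, h₁⟩ <;> rw [hWbar', h₀, h₁] <;> norm_num
  have hcross : ∀ p, ((W p 0 - Wbar) * ∑ i, ε p 0 i) * ((W p 1 - Wbar) * ∑ i, ε p 1 i)
      = -(m ^ 2 / 4) * ((Yhat1 p - Ybar1) * (Yhat0 p - Ybar0)) := fun p => by
    rw [hWbar', hres, hres, hYhat1, hYhat0]
    exact cross_term_of_pair (hcases p) m Ybar1 Ybar0 (Ybargp p)
  rw [hVunit, hVpair, ← sub_div, sum_sum_sq_sub_sum_sq_sum, hD, sum_congr rfl fun p _ => hcross p,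
    ← mul_sum, hYbar1, hYbar0, sum_sub_mean_mul_sub_mean]
  field_simp
  ring
end

section
/- If additionally A_1, A_2, B_1, B_2 are square-integrable and there is a real constant c with A_g = B_g + c almost surely for g = 1,2 (constant treatment effect within the pair), then Cov(Ŷ(1), Ŷ(0)) = Cov(B_1, B_2) − (1/4)(E[B_1] − E[B_2])². -/
/-!
On the event `W ∈ {0, 1}` the constant effect gives `Ŷ(1) = W B₁ + (1 − W) B₂ + c`, and since
`W (1 − W) = 0` the product collapses to `Ŷ(1) Ŷ(0) = B₁ B₂ + c Ŷ(0)`. Independence of `W` with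
`E[W] = 1/2` makes both `Ŷ(0)` and `Ŷ(1) − c` have mean `(E[B₁] + E[B₂]) / 2`, so the covariance
is `E[B₁ B₂] − ((E[B₁] + E[B₂]) / 2)²`, which is the claimed expression.
-/

open MeasureTheory ProbabilityTheory

section ZeroOne

variable {Ω : Type*} [MeasurableSpace Ω] {μ : Measure Ω} {W : Ω → ℝ}

theorem ae_eq_indicator_of_ae_eq_zero_or_one (h01 : ∀ᵐ ω ∂μ, W ω = 0 ∨ W ω = 1) :
    W =ᵐ[μ] {ω | W ω = 1}.indicator 1 := by
  filter_upwards [h01] with ω hω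
  rcases hω with h | h <;> simp [h]

theorem integrable_of_ae_eq_zero_or_one [IsFiniteMeasure μ] (hW : Measurable W)
    (h01 : ∀ᵐ ω ∂μ, W ω = 0 ∨ W ω = 1) : Integrable W μ :=
  ((integrable_const 1).indicator (hW (measurableSet_singleton 1))).congr
    (ae_eq_indicator_of_ae_eq_zero_or_one h01).symm

theorem integral_eq_measureReal_of_ae_eq_zero_or_one (hW : Measurable W)
    (h01 : ∀ᵐ ω ∂μ, W ω = 0 ∨ W ω = 1) : ∫ ω, W ω ∂μ = μ.real {ω | W ω = 1} := by
  rw [integral_congr_ae (ae_eq_indicator_of_ae_eq_zero_or_one h01)]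
  exact integral_indicator_one (hW (measurableSet_singleton 1))

end ZeroOne

section Mixture

variable {Ω : Type*} [MeasurableSpace Ω] {μ : Measure Ω} [IsProbabilityMeasure μ]
  {W X Y : Ω → ℝ}

theorem integrable_mixture_of_indepFun (hW : Integrable W μ) (hX : Integrable X μ)
    (hY : Integrable Y μ) (hWX : IndepFun W X μ) (hWY : IndepFun W Y μ) :
    Integrable (fun ω => W ω * X ω + (1 - W ω) * Y ω) μ :=
  (hWX.integrable_mul hW hX).add
    ((hWY.comp (measurable_const.sub measurable_id) measurable_id).integrable_mul
      ((integrable_const 1).sub hW) hY)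

theorem integral_mixture_of_indepFun (hW : Integrable W μ) (hX : Integrable X μ)
    (hY : Integrable Y μ) (hWX : IndepFun W X μ) (hWY : IndepFun W Y μ) :
    ∫ ω, (W ω * X ω + (1 - W ω) * Y ω) ∂μ
      = (∫ ω, W ω ∂μ) * (∫ ω, X ω ∂μ) + (1 - ∫ ω, W ω ∂μ) * (∫ ω, Y ω ∂μ) := by
  have hW' : Integrable (fun ω => 1 - W ω) μ := (integrable_const 1).sub hW
  have hW'Y : IndepFun (fun ω => 1 - W ω) Y μ :=
    hWY.comp (measurable_const.sub measurable_id) measurable_id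
  have hWX_int : Integrable (fun ω => W ω * X ω) μ := hWX.integrable_mul hW hX
  have hW'Y_int : Integrable (fun ω => (1 - W ω) * Y ω) μ := hW'Y.integrable_mul hW' hY
  rw [integral_add hWX_int hW'Y_int,
    hWX.integral_fun_mul_eq_mul_integral hW.1 hX.1,
    hW'Y.integral_fun_mul_eq_mul_integral hW'.1 hY.1,
    integral_sub (integrable_const 1) hW, integral_const]
  simp

end Mixture

theorem covariance_treated_untreated_means_constant_effect_general
    {Ω : Type*} [MeasureSpace Ω] [IsProbabilityMeasure (ℙ : Measure Ω)]
    (A₁ A₂ B₁ B₂ W : Ω → ℝ)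
    (hW : Measurable W)
    (hW01 : ∀ᵐ ω ∂ℙ, W ω = 0 ∨ W ω = 1)
    (hWhalf : (ℙ : Measure Ω) {ω | W ω = 1} = 1 / 2)
    (hindep : IndepFun W (fun ω => (A₁ ω, A₂ ω, B₁ ω, B₂ ω)) ℙ)
    (hB₁L2 : MemLp B₁ 2 ℙ) (hB₂L2 : MemLp B₂ 2 ℙ)
    (c : ℝ)
    (hc₁ : ∀ᵐ ω ∂ℙ, A₁ ω = B₁ ω + c)
    (hc₂ : ∀ᵐ ω ∂ℙ, A₂ ω = B₂ ω + c)
    (Y1 Y0 : Ω → ℝ)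
    (hY1 : ∀ ω, Y1 ω = W ω * A₁ ω + (1 - W ω) * A₂ ω)
    (hY0 : ∀ ω, Y0 ω = (1 - W ω) * B₁ ω + W ω * B₂ ω) :
    (∫ ω, Y1 ω * Y0 ω) - (∫ ω, Y1 ω) * (∫ ω, Y0 ω)
      = ((∫ ω, B₁ ω * B₂ ω) - (∫ ω, B₁ ω) * (∫ ω, B₂ ω))
        - (1 / 4) * ((∫ ω, B₁ ω) - (∫ ω, B₂ ω)) ^ 2 := by
  have hWB₁ : IndepFun W B₁ ℙ :=
    hindep.comp measurable_id (measurable_fst.comp (measurable_snd.comp measurable_snd))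
  have hWB₂ : IndepFun W B₂ ℙ :=
    hindep.comp measurable_id (measurable_snd.comp (measurable_snd.comp measurable_snd))
  have hB₁ : Integrable B₁ ℙ := hB₁L2.integrable one_le_two
  have hB₂ : Integrable B₂ ℙ := hB₂L2.integrable one_le_two
  have hWint : Integrable W ℙ := integrable_of_ae_eq_zero_or_one hW hW01
  have hEW : ∫ ω, W ω = 1 / 2 := by
    rw [integral_eq_measureReal_of_ae_eq_zero_or_one hW hW01, measureReal_def, hWhalf]
    norm_num
  have hY0_eq : Y0 = fun ω => W ω * B₂ ω + (1 - W ω) * B₁ ω :=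
    funext fun ω => by rw [hY0]; ring
  have hY0int : Integrable Y0 ℙ := by
    rw [hY0_eq]; exact integrable_mixture_of_indepFun hWint hB₂ hB₁ hWB₂ hWB₁
  have hEY0 : ∫ ω, Y0 ω = (1 / 2) * (∫ ω, B₁ ω) + (1 / 2) * (∫ ω, B₂ ω) := by
    rw [hY0_eq, integral_mixture_of_indepFun hWint hB₂ hB₁ hWB₂ hWB₁, hEW]; ring
  have hY1_ae : Y1 =ᵐ[ℙ] fun ω => (W ω * B₁ ω + (1 - W ω) * B₂ ω) + c := by
    filter_upwards [hc₁, hc₂] with ω h₁ h₂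
    rw [hY1, h₁, h₂]; ring
  have hEY1 : ∫ ω, Y1 ω = (1 / 2) * (∫ ω, B₁ ω) + (1 / 2) * (∫ ω, B₂ ω) + c := by
    rw [integral_congr_ae hY1_ae,
      integral_add (integrable_mixture_of_indepFun hWint hB₁ hB₂ hWB₁ hWB₂) (integrable_const c),
      integral_mixture_of_indepFun hWint hB₁ hB₂ hWB₁ hWB₂, hEW, integral_const, probReal_univ,
      smul_eq_mul, one_mul]
    ring
  have hprod_ae : (fun ω => Y1 ω * Y0 ω) =ᵐ[ℙ] fun ω => B₁ ω * B₂ ω + c * Y0 ω := by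
    filter_upwards [hW01, hc₁, hc₂] with ω hw h₁ h₂
    rw [hY1, hY0, h₁, h₂]
    rcases hw with h | h <;> rw [h] <;> ring
  have hB₁B₂ : Integrable (fun ω => B₁ ω * B₂ ω) ℙ := hB₁L2.integrable_mul hB₂L2
  have hEprod : ∫ ω, Y1 ω * Y0 ω = (∫ ω, B₁ ω * B₂ ω) + c * ∫ ω, Y0 ω := by
    rw [integral_congr_ae hprod_ae, integral_add hB₁B₂ (hY0int.const_mul c), integral_const_mul]
  rw [hEprod, hEY0, hEY1]
  ring

/-- For a single pair with unit-mean potential outcomes `A₁, A₂` (treated) and `B₁, B₂`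
(untreated), a Bernoulli(1/2) treatment indicator `W` independent of the potential outcomes,
square-integrable potential outcomes, and a constant treatment effect `c` within the pair
(`A_g = B_g + c` a.s.), the covariance of `Ŷ(1) = W A₁ + (1−W) A₂` and
`Ŷ(0) = (1−W) B₁ + W B₂` equals `Cov(B₁, B₂) − (1/4)(E[B₁] − E[B₂])²`. -/
theorem covariance_treated_untreated_means_constant_effect
    {Ω : Type*} [MeasureSpace Ω] [IsProbabilityMeasure (ℙ : Measure Ω)]
    (A₁ A₂ B₁ B₂ W : Ω → ℝ)
    (hA₁ : Measurable A₁) (hA₂ : Measurable A₂)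
    (hB₁ : Measurable B₁) (hB₂ : Measurable B₂) (hW : Measurable W)
    (hW01 : ∀ᵐ ω ∂ℙ, W ω = 0 ∨ W ω = 1)
    (hWhalf : (ℙ : Measure Ω) {ω | W ω = 1} = 1 / 2)
    (hindep : IndepFun W (fun ω => (A₁ ω, A₂ ω, B₁ ω, B₂ ω)) ℙ)
    (hA₁L2 : MemLp A₁ 2 ℙ) (hA₂L2 : MemLp A₂ 2 ℙ)
    (hB₁L2 : MemLp B₁ 2 ℙ) (hB₂L2 : MemLp B₂ 2 ℙ)
    (c : ℝ)
    (hc₁ : ∀ᵐ ω ∂ℙ, A₁ ω = B₁ ω + c)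
    (hc₂ : ∀ᵐ ω ∂ℙ, A₂ ω = B₂ ω + c)
    (Y1 Y0 : Ω → ℝ)
    (hY1 : ∀ ω, Y1 ω = W ω * A₁ ω + (1 - W ω) * A₂ ω)
    (hY0 : ∀ ω, Y0 ω = (1 - W ω) * B₁ ω + W ω * B₂ ω) :
    (∫ ω, Y1 ω * Y0 ω) - (∫ ω, Y1 ω) * (∫ ω, Y0 ω)
      = ((∫ ω, B₁ ω * B₂ ω) - (∫ ω, B₁ ω) * (∫ ω, B₂ ω))
        - (1 / 4) * ((∫ ω, B₁ ω) - (∫ ω, B₂ ω)) ^ 2 :=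
  covariance_treated_untreated_means_constant_effect_general A₁ A₂ B₁ B₂ W hW hW01 hWhalf hindep
    hB₁L2 hB₂L2 c hc₁ hc₂ Y1 Y0 hY1 hY0
end

section
/- For every P ≥ 2, with Ȳ(d) = (1/P)Σ_{p≤P} Ŷ_p(d) for d = 0,1 and D_P = (2/P²)Σ_{p≤P} Ŷ_p(1)Ŷ_p(0) − (2/P)Ȳ(1)Ȳ(0) (which equals V̂_unit(τ̂) − V̂_pair(τ̂) in a balanced paired experiment), one has (P/(P−1))·E[D_P] = (2/P²)Σ_{p≤P} Cov(B_{1p}, B_{2p}) − (1/(2P²))Σ_{p≤P}(E[B_{1p} − B_{2p}])² + (2/(P(P−1)))Σ_{p≤P}(E[B̄_p] − (1/P)Σ_{p'≤P} E[B̄_{p'}])². -/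
/-!
Write `Ŷ_p(1) = W_p A_{1p} + (1 - W_p) A_{2p}` and `Ŷ_p(0) = W_p B_{2p} + (1 - W_p) B_{1p}`.
Since the fair coin `W_p` is independent of the potential outcomes, `E Ŷ_p(1) = E B̄_p + τ` and
`E Ŷ_p(0) = E B̄_p`; since `W_p (1 - W_p) = 0`, constant effects give
`Ŷ_p(1) Ŷ_p(0) = B_{1p} B_{2p} + τ Ŷ_p(0)`, so `E[Ŷ_p(1) Ŷ_p(0)] = E[B_{1p} B_{2p}] + τ E B̄_p`.
Independence across pairs turns `E[(Σ_p Ŷ_p(1)) (Σ_q Ŷ_q(0))]` into the product of the sums of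
the means plus the diagonal covariances. Substituting these moments into `E D_P`, the terms in `τ`
cancel and the rest is an identity between finite sums.
-/

open Finset MeasureTheory ProbabilityTheory

section RandomSelect

variable {Ω : Type*} {W U V : Ω → ℝ}

def randomSelect (W U V : Ω → ℝ) (ω : Ω) : ℝ := W ω * U ω + (1 - W ω) * V ω

theorem randomSelect_eq_add_mul_sub (W U V : Ω → ℝ) :
    randomSelect W U V = V + W * (U - V) := by
  ext ω
  simp only [randomSelect, Pi.add_apply, Pi.mul_apply, Pi.sub_apply]
  ring

variable [MeasurableSpace Ω] {μ : Measure Ω}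

structure IsFairCoin (W : Ω → ℝ) (μ : Measure Ω) : Prop where
  measurable : Measurable W
  ae_eq_zero_or_one : ∀ᵐ ω ∂μ, W ω = 0 ∨ W ω = 1
  measure_eq_one : μ {ω | W ω = 1} = 1 / 2

theorem IsFairCoin.ae_eq_indicator (hW : IsFairCoin W μ) :
    W =ᵐ[μ] {ω | W ω = 1}.indicator 1 := by
  filter_upwards [hW.ae_eq_zero_or_one] with ω h
  rcases h with h | h <;> simp [h]

theorem IsFairCoin.integrable [IsFiniteMeasure μ] (hW : IsFairCoin W μ) : Integrable W μ :=
  ((integrable_const 1).indicator (hW.measurable (measurableSet_singleton 1))).congr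
    hW.ae_eq_indicator.symm

theorem IsFairCoin.integral_eq (hW : IsFairCoin W μ) : ∫ ω, W ω ∂μ = 1 / 2 := by
  have hs : MeasurableSet {ω | W ω = 1} := hW.measurable (measurableSet_singleton 1)
  rw [integral_congr_ae hW.ae_eq_indicator, integral_indicator_one hs, measureReal_def,
    hW.measure_eq_one]
  simp

theorem IsFairCoin.integrable_randomSelect [IsFiniteMeasure μ] (hW : IsFairCoin W μ)
    (hind : W ⟂ᵢ[μ] fun ω => (U ω, V ω)) (hU : Integrable U μ) (hV : Integrable V μ) :
    Integrable (randomSelect W U V) μ := by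
  have hWUV : W ⟂ᵢ[μ] (U - V) := hind.comp measurable_id (measurable_fst.sub measurable_snd)
  rw [randomSelect_eq_add_mul_sub]
  exact hV.add (hWUV.integrable_mul hW.integrable (hU.sub hV))

theorem IsFairCoin.integral_randomSelect [IsFiniteMeasure μ] (hW : IsFairCoin W μ)
    (hind : W ⟂ᵢ[μ] fun ω => (U ω, V ω)) (hU : Integrable U μ) (hV : Integrable V μ) :
    ∫ ω, randomSelect W U V ω ∂μ = ((∫ ω, U ω ∂μ) + ∫ ω, V ω ∂μ) / 2 := by
  have hWUV : W ⟂ᵢ[μ] (U - V) := hind.comp measurable_id (measurable_fst.sub measurable_snd)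
  rw [randomSelect_eq_add_mul_sub,
    integral_add' hV (hWUV.integrable_mul hW.integrable (hU.sub hV)),
    hWUV.integral_mul_eq_mul_integral hW.integrable.aestronglyMeasurable
      (hU.sub hV).aestronglyMeasurable, integral_sub' hU hV, hW.integral_eq]
  ring

variable {A₁ A₂ B₁ B₂ : Ω → ℝ} {τ : ℝ}

theorem randomSelect_ae_eq_of_ae_eq_add_const (h₁ : ∀ᵐ ω ∂μ, A₁ ω = B₁ ω + τ)
    (h₂ : ∀ᵐ ω ∂μ, A₂ ω = B₂ ω + τ) :
    randomSelect W A₁ A₂ =ᵐ[μ] fun ω => randomSelect W B₁ B₂ ω + τ := by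
  filter_upwards [h₁, h₂] with ω hω₁ hω₂
  simp only [randomSelect, hω₁, hω₂]
  ring

theorem randomSelect_mul_randomSelect_swap_ae_eq (h01 : ∀ᵐ ω ∂μ, W ω = 0 ∨ W ω = 1)
    (h₁ : ∀ᵐ ω ∂μ, A₁ ω = B₁ ω + τ) (h₂ : ∀ᵐ ω ∂μ, A₂ ω = B₂ ω + τ) :
    (fun ω => randomSelect W A₁ A₂ ω * randomSelect W B₂ B₁ ω)
      =ᵐ[μ] fun ω => B₁ ω * B₂ ω + τ * randomSelect W B₂ B₁ ω := by
  filter_upwards [h01, h₁, h₂] with ω hW hω₁ hω₂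
  rcases hW with hW | hW <;> simp only [randomSelect, hW, hω₁, hω₂] <;> ring

structure IsConstantEffectPair (W A₁ A₂ B₁ B₂ : Ω → ℝ) (τ : ℝ) (μ : Measure Ω) : Prop where
  isFairCoin : IsFairCoin W μ
  indepFun : W ⟂ᵢ[μ] fun ω => (B₁ ω, B₂ ω)
  memLp_two₁ : MemLp B₁ 2 μ
  memLp_two₂ : MemLp B₂ 2 μ
  ae_eq_add_const₁ : ∀ᵐ ω ∂μ, A₁ ω = B₁ ω + τ
  ae_eq_add_const₂ : ∀ᵐ ω ∂μ, A₂ ω = B₂ ω + τ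

namespace IsConstantEffectPair

theorem indepFun_swap (h : IsConstantEffectPair W A₁ A₂ B₁ B₂ τ μ) :
    W ⟂ᵢ[μ] fun ω => (B₂ ω, B₁ ω) :=
  h.indepFun.comp measurable_id measurable_swap

theorem treated_mul_control_ae_eq (h : IsConstantEffectPair W A₁ A₂ B₁ B₂ τ μ) :
    (fun ω => randomSelect W A₁ A₂ ω * randomSelect W B₂ B₁ ω)
      =ᵐ[μ] fun ω => B₁ ω * B₂ ω + τ * randomSelect W B₂ B₁ ω :=
  randomSelect_mul_randomSelect_swap_ae_eq h.isFairCoin.ae_eq_zero_or_one h.ae_eq_add_const₁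
    h.ae_eq_add_const₂

theorem integrable_mul (h : IsConstantEffectPair W A₁ A₂ B₁ B₂ τ μ) :
    Integrable (fun ω => B₁ ω * B₂ ω) μ :=
  h.memLp_two₁.integrable_mul h.memLp_two₂

variable [IsProbabilityMeasure μ]

theorem integrable₁ (h : IsConstantEffectPair W A₁ A₂ B₁ B₂ τ μ) : Integrable B₁ μ :=
  h.memLp_two₁.integrable one_le_two

theorem integrable₂ (h : IsConstantEffectPair W A₁ A₂ B₁ B₂ τ μ) : Integrable B₂ μ :=
  h.memLp_two₂.integrable one_le_two

theorem integrable_control (h : IsConstantEffectPair W A₁ A₂ B₁ B₂ τ μ) :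
    Integrable (randomSelect W B₂ B₁) μ :=
  h.isFairCoin.integrable_randomSelect h.indepFun_swap h.integrable₂ h.integrable₁

theorem integral_control (h : IsConstantEffectPair W A₁ A₂ B₁ B₂ τ μ) :
    ∫ ω, randomSelect W B₂ B₁ ω ∂μ = ((∫ ω, B₁ ω ∂μ) + ∫ ω, B₂ ω ∂μ) / 2 := by
  rw [h.isFairCoin.integral_randomSelect h.indepFun_swap h.integrable₂ h.integrable₁, add_comm]

theorem integrable_treated (h : IsConstantEffectPair W A₁ A₂ B₁ B₂ τ μ) :
    Integrable (randomSelect W A₁ A₂) μ :=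
  ((h.isFairCoin.integrable_randomSelect h.indepFun h.integrable₁ h.integrable₂).add
    (integrable_const τ)).congr
    (randomSelect_ae_eq_of_ae_eq_add_const h.ae_eq_add_const₁ h.ae_eq_add_const₂).symm

theorem integral_treated (h : IsConstantEffectPair W A₁ A₂ B₁ B₂ τ μ) :
    ∫ ω, randomSelect W A₁ A₂ ω ∂μ = ((∫ ω, B₁ ω ∂μ) + ∫ ω, B₂ ω ∂μ) / 2 + τ := by
  rw [integral_congr_ae
      (randomSelect_ae_eq_of_ae_eq_add_const h.ae_eq_add_const₁ h.ae_eq_add_const₂),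
    integral_add (h.isFairCoin.integrable_randomSelect h.indepFun h.integrable₁ h.integrable₂)
      (integrable_const τ),
    h.isFairCoin.integral_randomSelect h.indepFun h.integrable₁ h.integrable₂, integral_const,
    probReal_univ, one_smul]

theorem integrable_treated_mul_control (h : IsConstantEffectPair W A₁ A₂ B₁ B₂ τ μ) :
    Integrable (fun ω => randomSelect W A₁ A₂ ω * randomSelect W B₂ B₁ ω) μ :=
  (h.integrable_mul.add (h.integrable_control.const_mul τ)).congr
    h.treated_mul_control_ae_eq.symm

theorem integral_treated_mul_control (h : IsConstantEffectPair W A₁ A₂ B₁ B₂ τ μ) :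
    ∫ ω, randomSelect W A₁ A₂ ω * randomSelect W B₂ B₁ ω ∂μ
      = (∫ ω, B₁ ω * B₂ ω ∂μ) + τ * (((∫ ω, B₁ ω ∂μ) + ∫ ω, B₂ ω ∂μ) / 2) := by
  rw [integral_congr_ae h.treated_mul_control_ae_eq,
    integral_add h.integrable_mul (h.integrable_control.const_mul τ),
    integral_const_mul, h.integral_control]

end IsConstantEffectPair

end RandomSelect

section IndependentSums

variable {Ω ι : Type*} [MeasurableSpace Ω] {μ : Measure Ω}

theorem integrable_mul_of_indepFun_of_ne {X Y : ι → Ω → ℝ} (s : Finset ι)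
    (hX : ∀ i ∈ s, Integrable (X i) μ) (hY : ∀ i ∈ s, Integrable (Y i) μ)
    (hXY : ∀ i ∈ s, Integrable (fun ω => X i ω * Y i ω) μ)
    (hind : ∀ i ∈ s, ∀ j ∈ s, i ≠ j → X i ⟂ᵢ[μ] Y j) :
    ∀ i ∈ s, ∀ j ∈ s, Integrable (fun ω => X i ω * Y j ω) μ := by
  intro i hi j hj
  obtain rfl | hij := eq_or_ne i j
  exacts [hXY i hi, (hind i hi j hj hij).integrable_mul (hX i hi) (hY j hj)]

theorem integrable_sum_mul_sum_of_indepFun {X Y : ι → Ω → ℝ} (s : Finset ι)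
    (hX : ∀ i ∈ s, Integrable (X i) μ) (hY : ∀ i ∈ s, Integrable (Y i) μ)
    (hXY : ∀ i ∈ s, Integrable (fun ω => X i ω * Y i ω) μ)
    (hind : ∀ i ∈ s, ∀ j ∈ s, i ≠ j → X i ⟂ᵢ[μ] Y j) :
    Integrable (fun ω => (∑ i ∈ s, X i ω) * (∑ j ∈ s, Y j ω)) μ := by
  have hint := integrable_mul_of_indepFun_of_ne s hX hY hXY hind
  simp_rw [sum_mul_sum]
  exact integrable_finsetSum s fun i hi => integrable_finsetSum s fun j hj => hint i hi j hj

theorem integral_sum_mul_sum_of_indepFun [DecidableEq ι] {X Y : ι → Ω → ℝ} (s : Finset ι)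
    (hX : ∀ i ∈ s, Integrable (X i) μ) (hY : ∀ i ∈ s, Integrable (Y i) μ)
    (hXY : ∀ i ∈ s, Integrable (fun ω => X i ω * Y i ω) μ)
    (hind : ∀ i ∈ s, ∀ j ∈ s, i ≠ j → X i ⟂ᵢ[μ] Y j) :
    ∫ ω, (∑ i ∈ s, X i ω) * (∑ j ∈ s, Y j ω) ∂μ
      = (∑ i ∈ s, ∫ ω, X i ω ∂μ) * (∑ j ∈ s, ∫ ω, Y j ω ∂μ)
        + ∑ i ∈ s, ((∫ ω, X i ω * Y i ω ∂μ) - (∫ ω, X i ω ∂μ) * ∫ ω, Y i ω ∂μ) := by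
  have hint := integrable_mul_of_indepFun_of_ne s hX hY hXY hind
  have hterm : ∀ i ∈ s, ∀ j ∈ s, ∫ ω, X i ω * Y j ω ∂μ
      = (∫ ω, X i ω ∂μ) * (∫ ω, Y j ω ∂μ)
        + if i = j then (∫ ω, X i ω * Y i ω ∂μ) - (∫ ω, X i ω ∂μ) * ∫ ω, Y i ω ∂μ else 0 := by
    intro i hi j hj
    obtain rfl | hij := eq_or_ne i j
    · simp
    · rw [(hind i hi j hj hij).integral_fun_mul_eq_mul_integral (hX i hi).aestronglyMeasurable
        (hY j hj).aestronglyMeasurable, if_neg hij, add_zero]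
  calc ∫ ω, (∑ i ∈ s, X i ω) * (∑ j ∈ s, Y j ω) ∂μ
      = ∑ i ∈ s, ∑ j ∈ s, ∫ ω, X i ω * Y j ω ∂μ := by
        simp_rw [sum_mul_sum]
        rw [integral_finsetSum s fun i hi => integrable_finsetSum s fun j hj => hint i hi j hj]
        exact sum_congr rfl fun i hi => integral_finsetSum s fun j hj => hint i hi j hj
    _ = _ := by
      rw [sum_congr rfl fun i hi => sum_congr rfl fun j hj => hterm i hi j hj]
      simp [sum_add_distrib, sum_mul_sum]

noncomputable def unitPairVarianceDiff (P : ℕ) (X Y : ℕ → Ω → ℝ) (ω : Ω) : ℝ :=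
  (2 / (P : ℝ) ^ 2) * ∑ p ∈ range P, X p ω * Y p ω
    - (2 / (P : ℝ)) * (((∑ p ∈ range P, X p ω) / P) * ((∑ p ∈ range P, Y p ω) / P))

theorem integral_unitPairVarianceDiff (P : ℕ) {X Y : ℕ → Ω → ℝ}
    (hX : ∀ p, Integrable (X p) μ) (hY : ∀ p, Integrable (Y p) μ)
    (hXY : ∀ p, Integrable (fun ω => X p ω * Y p ω) μ) (hind : ∀ p q, p ≠ q → X p ⟂ᵢ[μ] Y q) :
    ∫ ω, unitPairVarianceDiff P X Y ω ∂μ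
      = (2 / (P : ℝ) ^ 2) * ∑ p ∈ range P, ∫ ω, X p ω * Y p ω ∂μ
        - (2 / (P : ℝ) ^ 3) * ((∑ p ∈ range P, ∫ ω, X p ω ∂μ) * (∑ p ∈ range P, ∫ ω, Y p ω ∂μ)
          + ∑ p ∈ range P,
              ((∫ ω, X p ω * Y p ω ∂μ) - (∫ ω, X p ω ∂μ) * ∫ ω, Y p ω ∂μ)) := by
  have hint := integrable_sum_mul_sum_of_indepFun (range P) (fun p _ => hX p) (fun p _ => hY p)
    (fun p _ => hXY p) (fun p _ q _ hpq => hind p q hpq)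
  have hexpand ω : unitPairVarianceDiff P X Y ω = (2 / (P : ℝ) ^ 2) * ∑ p ∈ range P, X p ω * Y p ω
      - (2 / (P : ℝ) ^ 3) * ((∑ p ∈ range P, X p ω) * ∑ p ∈ range P, Y p ω) := by
    rw [unitPairVarianceDiff]
    ring
  simp_rw [hexpand]
  rw [integral_sub ((integrable_finsetSum _ fun p _ => hXY p).const_mul _) (hint.const_mul _),
    integral_const_mul, integral_const_mul, integral_finsetSum _ fun p _ => hXY p,
    integral_sum_mul_sum_of_indepFun (range P) (fun p _ => hX p) (fun p _ => hY p)
      (fun p _ => hXY p) (fun p _ q _ hpq => hind p q hpq)]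

end IndependentSums

-- `b₁ p`, `b₂ p` and `c p` stand for `E B_{1p}`, `E B_{2p}` and `E[B_{1p} B_{2p}]`.
theorem unitPairVarianceDiff_moment_identity (τ : ℝ) (P : ℕ) (hP : 2 ≤ P) (b₁ b₂ c : ℕ → ℝ) :
    ((P : ℝ) / ((P : ℝ) - 1)) *
      ((2 / (P : ℝ) ^ 2) * ∑ p ∈ range P, (c p + τ * ((b₁ p + b₂ p) / 2))
        - (2 / (P : ℝ) ^ 3) * ((∑ p ∈ range P, ((b₁ p + b₂ p) / 2 + τ))
            * (∑ p ∈ range P, (b₁ p + b₂ p) / 2)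
          + ∑ p ∈ range P, (c p + τ * ((b₁ p + b₂ p) / 2)
              - ((b₁ p + b₂ p) / 2 + τ) * ((b₁ p + b₂ p) / 2))))
      = (2 / (P : ℝ) ^ 2) * ∑ p ∈ range P, (c p - b₁ p * b₂ p)
        - (1 / (2 * (P : ℝ) ^ 2)) * ∑ p ∈ range P, (b₁ p - b₂ p) ^ 2
        + (2 / ((P : ℝ) * ((P : ℝ) - 1))) * ∑ p ∈ range P,
            ((b₁ p + b₂ p) / 2 - (∑ p' ∈ range P, (b₁ p' + b₂ p') / 2) / P) ^ 2 := by
  have hP0 : (P : ℝ) ≠ 0 := by positivity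
  have hP1 : (P : ℝ) - 1 ≠ 0 := by
    have : (2 : ℝ) ≤ P := by exact_mod_cast hP
    linarith
  simp only [sub_sq, add_sq, mul_add, add_mul, mul_sub, div_pow, sum_add_distrib, sum_sub_distrib,
    ← mul_sum, ← sum_mul, ← sum_div, sum_const, card_range, nsmul_eq_mul]
  field_simp
  ring_nf
  simp only [sum_add_distrib, ← sum_mul]
  ring

theorem expectation_diff_unit_pair_clustered_variance_general
    {Ω : Type*} [MeasureSpace Ω] [IsProbabilityMeasure (ℙ : Measure Ω)]
    (A₁ A₂ B₁ B₂ W : ℕ → Ω → ℝ)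
    (hW : ∀ p, Measurable (W p))
    (hB₁L2 : ∀ p, MemLp (B₁ p) 2 ℙ) (hB₂L2 : ∀ p, MemLp (B₂ p) 2 ℙ)
    (hW01 : ∀ p, ∀ᵐ ω ∂ℙ, W p ω = 0 ∨ W p ω = 1)
    (hWhalf : ∀ p, (ℙ : Measure Ω) {ω | W p ω = 1} = 1 / 2)
    (hindep_across : iIndepFun
        (fun p ω => (W p ω, A₁ p ω, A₂ p ω, B₁ p ω, B₂ p ω)) ℙ)
    (hindep_within : ∀ p,
        IndepFun (W p) (fun ω => (A₁ p ω, A₂ p ω, B₁ p ω, B₂ p ω)) ℙ)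
    (τ : ℝ)
    (hcte₁ : ∀ p, ∀ᵐ ω ∂ℙ, A₁ p ω = B₁ p ω + τ)
    (hcte₂ : ∀ p, ∀ᵐ ω ∂ℙ, A₂ p ω = B₂ p ω + τ)
    (Yh1 Yh0 : ℕ → Ω → ℝ)
    (hYh1 : ∀ p ω, Yh1 p ω = W p ω * A₁ p ω + (1 - W p ω) * A₂ p ω)
    (hYh0 : ∀ p ω, Yh0 p ω = (1 - W p ω) * B₁ p ω + W p ω * B₂ p ω)
    (Bbar : ℕ → Ω → ℝ)
    (hBbar : ∀ p ω, Bbar p ω = (B₁ p ω + B₂ p ω) / 2)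
    (P : ℕ) (hP : 2 ≤ P)
    (D : Ω → ℝ)
    (hD : ∀ ω, D ω = (2 / (P : ℝ) ^ 2) * ∑ p ∈ range P, Yh1 p ω * Yh0 p ω
        - (2 / (P : ℝ)) * (((∑ p ∈ range P, Yh1 p ω) / P) * ((∑ p ∈ range P, Yh0 p ω) / P))) :
    ((P : ℝ) / ((P : ℝ) - 1)) * ∫ ω, D ω
      = (2 / (P : ℝ) ^ 2) * ∑ p ∈ range P,
          ((∫ ω, B₁ p ω * B₂ p ω) - (∫ ω, B₁ p ω) * (∫ ω, B₂ p ω))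
        - (1 / (2 * (P : ℝ) ^ 2)) * ∑ p ∈ range P, (∫ ω, (B₁ p ω - B₂ p ω)) ^ 2
        + (2 / ((P : ℝ) * ((P : ℝ) - 1))) * ∑ p ∈ range P,
            ((∫ ω, Bbar p ω) - (∑ p' ∈ range P, ∫ ω, Bbar p' ω) / P) ^ 2 := by
  obtain rfl : Yh1 = fun p => randomSelect (W p) (A₁ p) (A₂ p) := funext fun p => funext (hYh1 p)
  obtain rfl : Yh0 = fun p => randomSelect (W p) (B₂ p) (B₁ p) :=
    funext fun p => funext fun ω => by rw [hYh0, randomSelect]; ring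
  obtain rfl : Bbar = fun p ω => (B₁ p ω + B₂ p ω) / 2 := funext fun p => funext (hBbar p)
  have hpair p : IsConstantEffectPair (W p) (A₁ p) (A₂ p) (B₁ p) (B₂ p) τ ℙ :=
    ⟨⟨hW p, hW01 p, hWhalf p⟩,
      (hindep_within p).comp measurable_id (ψ := fun x : ℝ × ℝ × ℝ × ℝ => (x.2.2.1, x.2.2.2))
        (by fun_prop),
      hB₁L2 p, hB₂L2 p, hcte₁ p, hcte₂ p⟩
  have hcross p q (hpq : p ≠ q) :
      randomSelect (W p) (A₁ p) (A₂ p) ⟂ᵢ[ℙ] randomSelect (W q) (B₂ q) (B₁ q) :=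
    (hindep_across.indepFun hpq).comp
      (φ := fun x : ℝ × ℝ × ℝ × ℝ × ℝ => x.1 * x.2.1 + (1 - x.1) * x.2.2.1)
      (ψ := fun x : ℝ × ℝ × ℝ × ℝ × ℝ => x.1 * x.2.2.2.2 + (1 - x.1) * x.2.2.2.1)
      (by fun_prop) (by fun_prop)
  obtain rfl : D = unitPairVarianceDiff P _ _ := funext hD
  rw [integral_unitPairVarianceDiff P (fun p => (hpair p).integrable_treated)
    (fun p => (hpair p).integrable_control) (fun p => (hpair p).integrable_treated_mul_control)
    hcross]
  simp only [fun p => (hpair p).integral_treated, fun p => (hpair p).integral_control,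
    fun p => (hpair p).integral_treated_mul_control, integral_div,
    fun p => integral_add (hpair p).integrable₁ (hpair p).integrable₂,
    fun p => integral_sub (hpair p).integrable₁ (hpair p).integrable₂]
  exact unitPairVarianceDiff_moment_identity τ P hP _ _ _

/-- In a paired experiment with independent pairs, Bernoulli(1/2) treatment within each pair
independent of potential outcomes, and constant treatment effects, the expectation of
`D_P = (2/P²) Σ_{p<P} Ŷ_p(1)Ŷ_p(0) − (2/P) Ȳ(1)Ȳ(0)` satisfies
`(P/(P−1)) E[D_P] = (2/P²) Σ_p Cov(B_{1p}, B_{2p}) − (1/(2P²)) Σ_p (E[B_{1p} − B_{2p}])²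
  + (2/(P(P−1))) Σ_p (E[B̄_p] − (1/P) Σ_{p'} E[B̄_{p'}])²`. -/
theorem expectation_diff_unit_pair_clustered_variance
    {Ω : Type*} [MeasureSpace Ω] [IsProbabilityMeasure (ℙ : Measure Ω)]
    (A₁ A₂ B₁ B₂ W : ℕ → Ω → ℝ)
    (hA₁ : ∀ p, Measurable (A₁ p)) (hA₂ : ∀ p, Measurable (A₂ p))
    (hB₁ : ∀ p, Measurable (B₁ p)) (hB₂ : ∀ p, Measurable (B₂ p))
    (hW : ∀ p, Measurable (W p))
    (hA₁L2 : ∀ p, MemLp (A₁ p) 2 ℙ) (hA₂L2 : ∀ p, MemLp (A₂ p) 2 ℙ)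
    (hB₁L2 : ∀ p, MemLp (B₁ p) 2 ℙ) (hB₂L2 : ∀ p, MemLp (B₂ p) 2 ℙ)
    (hW01 : ∀ p, ∀ᵐ ω ∂ℙ, W p ω = 0 ∨ W p ω = 1)
    (hWhalf : ∀ p, (ℙ : Measure Ω) {ω | W p ω = 1} = 1 / 2)
    (hindep_across : iIndepFun
        (fun p ω => (W p ω, A₁ p ω, A₂ p ω, B₁ p ω, B₂ p ω)) ℙ)
    (hindep_within : ∀ p,
        IndepFun (W p) (fun ω => (A₁ p ω, A₂ p ω, B₁ p ω, B₂ p ω)) ℙ)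
    (τ : ℝ)
    (hcte₁ : ∀ p, ∀ᵐ ω ∂ℙ, A₁ p ω = B₁ p ω + τ)
    (hcte₂ : ∀ p, ∀ᵐ ω ∂ℙ, A₂ p ω = B₂ p ω + τ)
    (Yh1 Yh0 : ℕ → Ω → ℝ)
    (hYh1 : ∀ p ω, Yh1 p ω = W p ω * A₁ p ω + (1 - W p ω) * A₂ p ω)
    (hYh0 : ∀ p ω, Yh0 p ω = (1 - W p ω) * B₁ p ω + W p ω * B₂ p ω)
    (Bbar : ℕ → Ω → ℝ)
    (hBbar : ∀ p ω, Bbar p ω = (B₁ p ω + B₂ p ω) / 2)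
    (P : ℕ) (hP : 2 ≤ P)
    (D : Ω → ℝ)
    (hD : ∀ ω, D ω = (2 / (P : ℝ) ^ 2) * ∑ p ∈ range P, Yh1 p ω * Yh0 p ω
        - (2 / (P : ℝ)) * (((∑ p ∈ range P, Yh1 p ω) / P) * ((∑ p ∈ range P, Yh0 p ω) / P))) :
    ((P : ℝ) / ((P : ℝ) - 1)) * ∫ ω, D ω
      = (2 / (P : ℝ) ^ 2) * ∑ p ∈ range P,
          ((∫ ω, B₁ p ω * B₂ p ω) - (∫ ω, B₁ p ω) * (∫ ω, B₂ p ω))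
        - (1 / (2 * (P : ℝ) ^ 2)) * ∑ p ∈ range P, (∫ ω, (B₁ p ω - B₂ p ω)) ^ 2
        + (2 / ((P : ℝ) * ((P : ℝ) - 1))) * ∑ p ∈ range P,
            ((∫ ω, Bbar p ω) - (∑ p' ∈ range P, ∫ ω, Bbar p' ω) / P) ^ 2 :=
  expectation_diff_unit_pair_clustered_variance_general A₁ A₂ B₁ B₂ W hW hB₁L2 hB₂L2 hW01 hWhalf
    hindep_across hindep_within τ hcte₁ hcte₂ Yh1 Yh0 hYh1 hYh0 Bbar hBbar P hP D hD
end

section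
/- Without any balance restriction on the n_{gp}, the variance estimators of the fixed-effects estimator satisfy (1/2)·V̂_pair(τ̂_fe) ≤ V̂_unit(τ̂_fe) ≤ V̂_pair(τ̂_fe); more precisely, V̂_unit(τ̂_fe) = Σ_p m_p ζ_p · V̂_pair(τ̂_fe) whenever Σ_p SET_{p,fe}² > 0, where m_p = (n_{1p}/n_p)² + (n_{2p}/n_p)² ∈ [1/2, 1] and ζ_p = SET_{p,fe}²/Σ_{p'} SET_{p',fe}² are nonnegative weights summing to one. -/
open Finset

/-!
The fixed-effects residuals sum to zero over each pair, so the two unit-level residual sums of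
pair `p` are `S` and `-S`. Hence the pair-clustered score `Σ_g (W_g - W̄_p) S_g` is just
`SET_p = Σ_g W_g S_g`, while the two unit-clustered scores are `±(n_{2p}/n_p)·SET_p` and
`±(n_{1p}/n_p)·SET_p`, whose squares add up to `m_p · SET_p²`. Both estimators share the
denominator, and `m_p ∈ [1/2, 1]` because it is `x² + y²` with `x, y ≥ 0` and `x + y = 1`.
-/

section Residuals

variable {ι : Type*} [Fintype ι]

theorem sum_sum_residual_eq_zero (n : ι → ℕ) (Y : (g : ι) → Fin (n g) → ℝ)
    (W : ι → ℝ) (τ N Ybar Wbar : ℝ) (hN : ∑ g, (n g : ℝ) = N) (hN₀ : N ≠ 0)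
    (hYbar : Ybar = (∑ g, ∑ i, Y g i) / N) (hWbar : Wbar = (∑ g, (n g : ℝ) * W g) / N) :
    ∑ g, ∑ i : Fin (n g), (Y g i - Ybar - τ * (W g - Wbar)) = 0 := by
  have hYbarN : Ybar * N = ∑ g, ∑ i, Y g i := by rw [hYbar, div_mul_cancel₀ _ hN₀]
  have hWbarN : Wbar * N = ∑ g, (n g : ℝ) * W g := by rw [hWbar, div_mul_cancel₀ _ hN₀]
  have hinner : ∀ g, ∑ i : Fin (n g), (Y g i - Ybar - τ * (W g - Wbar))
      = ∑ i, Y g i - (n g * Ybar + τ * (n g * W g) - τ * Wbar * n g) := fun g => by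
    simp only [sum_sub_distrib, sum_const, card_univ, Fintype.card_fin, nsmul_eq_mul]
    ring
  rw [sum_congr rfl fun g _ => hinner g, sum_sub_distrib, sum_sub_distrib, sum_add_distrib,
    ← mul_sum, ← sum_mul, ← mul_sum, hN]
  linear_combination -hYbarN + τ * hWbarN

theorem sum_sub_const_mul_of_sum_eq_zero (W S : ι → ℝ) (c : ℝ) (hS : ∑ g, S g = 0) :
    ∑ g, (W g - c) * S g = ∑ g, W g * S g := by
  simp only [sub_mul, sum_sub_distrib, ← mul_sum, hS, mul_zero, sub_zero]

end Residuals

theorem sq_add_sq_centered_mul_of_add_eq_zero (n₀ n₁ W₀ W₁ S₀ S₁ : ℝ) (hn : n₀ + n₁ ≠ 0)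
    (hS : S₀ + S₁ = 0) :
    ((W₀ - (n₀ * W₀ + n₁ * W₁) / (n₀ + n₁)) * S₀) ^ 2
      + ((W₁ - (n₀ * W₀ + n₁ * W₁) / (n₀ + n₁)) * S₁) ^ 2
      = ((n₀ / (n₀ + n₁)) ^ 2 + (n₁ / (n₀ + n₁)) ^ 2) * (W₀ * S₀ + W₁ * S₁) ^ 2 := by
  obtain rfl : S₁ = -S₀ := by linear_combination hS
  field_simp
  ring

theorem sq_div_add_sq_div_mem_Icc {a b : ℝ} (ha : 0 ≤ a) (hb : 0 ≤ b) (hab : 0 < a + b) :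
    (a / (a + b)) ^ 2 + (b / (a + b)) ^ 2 ∈ Set.Icc (1 / 2) 1 := by
  have hsum : a / (a + b) + b / (a + b) = 1 := by rw [← add_div, div_self hab.ne']
  have hx : 0 ≤ a / (a + b) := by positivity
  have hy : 0 ≤ b / (a + b) := by positivity
  constructor
  · nlinarith [sq_nonneg (a / (a + b) - b / (a + b))]
  · nlinarith [mul_nonneg hx hy]

theorem half_sum_le_sum_mul_le_sum {ι : Type*} (s : Finset ι) (m x : ι → ℝ)
    (hm : ∀ i, 1 / 2 ≤ m i ∧ m i ≤ 1) (hx : ∀ i, 0 ≤ x i) :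
    1 / 2 * ∑ i ∈ s, x i ≤ ∑ i ∈ s, m i * x i ∧ ∑ i ∈ s, m i * x i ≤ ∑ i ∈ s, x i := by
  rw [mul_sum]
  exact ⟨sum_le_sum fun i _ => mul_le_mul_of_nonneg_right (hm i).1 (hx i),
    sum_le_sum fun i _ => mul_le_of_le_one_left (hx i) (hm i).2⟩

theorem unit_vs_pair_clustered_variance_fe_unbalanced_general
    (P : ℕ)
    (n : Fin P → Fin 2 → ℕ) (hn : ∀ p g, 1 ≤ n p g)
    (W : Fin P → Fin 2 → ℝ)
    (Y : (p : Fin P) → (g : Fin 2) → Fin (n p g) → ℝ)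
    (τfe : ℝ)
    (Tp np Wbarp Ybarp : Fin P → ℝ)
    (hTp : ∀ p, Tp p = ∑ g : Fin 2, (n p g : ℝ) * W p g)
    (hnp : ∀ p, np p = (n p 0 : ℝ) + (n p 1 : ℝ))
    (hWbarp : ∀ p, Wbarp p = Tp p / np p)
    (hYbarp : ∀ p, Ybarp p = (∑ g : Fin 2, ∑ i : Fin (n p g), Y p g i) / np p)
    (u : (p : Fin P) → (g : Fin 2) → Fin (n p g) → ℝ)
    (hu : ∀ p g i, u p g i = Y p g i - Ybarp p - τfe * (W p g - Wbarp p))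
    (SETfe : Fin P → ℝ)
    (hSETfe : ∀ p, SETfe p = ∑ g : Fin 2, ∑ i : Fin (n p g), W p g * u p g i)
    (Vpairfe Vunitfe : ℝ)
    (hVpairfe : Vpairfe
        = (∑ p : Fin P, (∑ g : Fin 2, ∑ i : Fin (n p g), (W p g - Wbarp p) * u p g i) ^ 2)
        / (∑ p : Fin P, ∑ g : Fin 2, ∑ i : Fin (n p g), (W p g - Wbarp p) ^ 2) ^ 2)
    (hVunitfe : Vunitfe
        = (∑ p : Fin P, ∑ g : Fin 2, ((W p g - Wbarp p) * ∑ i : Fin (n p g), u p g i) ^ 2)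
        / (∑ p : Fin P, ∑ g : Fin 2, ∑ i : Fin (n p g), (W p g - Wbarp p) ^ 2) ^ 2)
    (m ζ : Fin P → ℝ)
    (hm : ∀ p, m p = ((n p 0 : ℝ) / np p) ^ 2 + ((n p 1 : ℝ) / np p) ^ 2)
    (hζ : ∀ p, ζ p = (SETfe p) ^ 2 / ∑ p' : Fin P, (SETfe p') ^ 2) :
    ((1 / 2) * Vpairfe ≤ Vunitfe ∧ Vunitfe ≤ Vpairfe)
    ∧ (∀ p, 1 / 2 ≤ m p ∧ m p ≤ 1)
    ∧ (0 < ∑ p : Fin P, (SETfe p) ^ 2 →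
        (∀ p, 0 ≤ ζ p) ∧ (∑ p : Fin P, ζ p = 1)
        ∧ Vunitfe = (∑ p : Fin P, m p * ζ p) * Vpairfe) := by
  have hnpos : ∀ p g, (0 : ℝ) < n p g := fun p g => by exact_mod_cast hn p g
  have hnsum : ∀ p, (0 : ℝ) < n p 0 + n p 1 := fun p => add_pos (hnpos p 0) (hnpos p 1)
  have hSsum : ∀ p, ∑ g, ∑ i, u p g i = 0 := fun p => by
    simp only [hu]
    exact sum_sum_residual_eq_zero _ _ _ _ _ _ _ (by rw [Fin.sum_univ_two, hnp])
      (hnp p ▸ (hnsum p).ne') (hYbarp p) (by rw [hWbarp, hTp])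
  have hSET : ∀ p, SETfe p = ∑ g, W p g * ∑ i, u p g i := fun p => by simp only [hSETfe, mul_sum]
  have hpair : ∀ p, ∑ g, ∑ i, (W p g - Wbarp p) * u p g i = SETfe p := fun p => by
    simp only [← mul_sum, hSET, sum_sub_const_mul_of_sum_eq_zero _ _ _ (hSsum p)]
  have hunit : ∀ p, ∑ g, ((W p g - Wbarp p) * ∑ i, u p g i) ^ 2 = m p * SETfe p ^ 2 :=
    fun p => by
      rw [hSET, hm, hWbarp, hTp, hnp, Fin.sum_univ_two, Fin.sum_univ_two, Fin.sum_univ_two]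
      exact sq_add_sq_centered_mul_of_add_eq_zero _ _ _ _ _ _ (hnsum p).ne'
        (by simpa only [Fin.sum_univ_two] using hSsum p)
  have hmb : ∀ p, 1 / 2 ≤ m p ∧ m p ≤ 1 := fun p => by
    rw [hm, hnp]
    exact sq_div_add_sq_div_mem_Icc (hnpos p 0).le (hnpos p 1).le (hnsum p)
  simp only [hpair] at hVpairfe
  simp only [hunit] at hVunitfe
  obtain ⟨hlow, hupp⟩ := half_sum_le_sum_mul_le_sum univ m (fun p => SETfe p ^ 2) hmb
    fun p => sq_nonneg _
  refine ⟨⟨?_, ?_⟩, hmb, fun hpos => ⟨fun p => by rw [hζ]; positivity, ?_, ?_⟩⟩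
  · rw [hVpairfe, hVunitfe, ← mul_div_assoc]
    exact div_le_div_of_nonneg_right hlow (by positivity)
  · rw [hVpairfe, hVunitfe]
    exact div_le_div_of_nonneg_right hupp (by positivity)
  · rw [sum_congr rfl fun p _ => hζ p, ← sum_div, div_self hpos.ne']
  · simp only [hVpairfe, hVunitfe, hζ, ← mul_div_assoc, ← sum_div]
    field_simp

/-- Without any balance restriction on the `n_{gp}`, the variance estimators of the
fixed-effects estimator satisfy `(1/2) V̂_pair(τ̂_fe) ≤ V̂_unit(τ̂_fe) ≤ V̂_pair(τ̂_fe)`;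
moreover `m_p = (n_{1p}/n_p)² + (n_{2p}/n_p)² ∈ [1/2, 1]`, and whenever `Σ_p SET_{p,fe}² > 0`,
the weights `ζ_p = SET_{p,fe}²/Σ_{p'} SET_{p',fe}²` are nonnegative, sum to one, and
`V̂_unit(τ̂_fe) = (Σ_p m_p ζ_p) · V̂_pair(τ̂_fe)`. -/
theorem unit_vs_pair_clustered_variance_fe_unbalanced
    (P : ℕ) (hP : 1 ≤ P)
    (n : Fin P → Fin 2 → ℕ) (hn : ∀ p g, 1 ≤ n p g)
    (W : Fin P → Fin 2 → ℝ)
    (hW01 : ∀ p g, W p g = 0 ∨ W p g = 1)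
    (hWpair : ∀ p, W p 0 + W p 1 = 1)
    (Y : (p : Fin P) → (g : Fin 2) → Fin (n p g) → ℝ)
    (w : Fin P → ℝ)
    (hw : ∀ p, w p = (1 / (n p 0 : ℝ) + 1 / (n p 1 : ℝ))⁻¹
        / ∑ p' : Fin P, (1 / (n p' 0 : ℝ) + 1 / (n p' 1 : ℝ))⁻¹)
    (τfe : ℝ)
    (hτfe : τfe = ∑ p : Fin P, w p * ∑ g : Fin 2,
        (2 * W p g - 1) * (∑ i : Fin (n p g), Y p g i) / (n p g : ℝ))
    (Tp np Wbarp Ybarp : Fin P → ℝ)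
    (hTp : ∀ p, Tp p = ∑ g : Fin 2, (n p g : ℝ) * W p g)
    (hnp : ∀ p, np p = (n p 0 : ℝ) + (n p 1 : ℝ))
    (hWbarp : ∀ p, Wbarp p = Tp p / np p)
    (hYbarp : ∀ p, Ybarp p = (∑ g : Fin 2, ∑ i : Fin (n p g), Y p g i) / np p)
    (u : (p : Fin P) → (g : Fin 2) → Fin (n p g) → ℝ)
    (hu : ∀ p g i, u p g i = Y p g i - Ybarp p - τfe * (W p g - Wbarp p))
    (SETfe : Fin P → ℝ)
    (hSETfe : ∀ p, SETfe p = ∑ g : Fin 2, ∑ i : Fin (n p g), W p g * u p g i)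
    (Vpairfe Vunitfe : ℝ)
    (hVpairfe : Vpairfe
        = (∑ p : Fin P, (∑ g : Fin 2, ∑ i : Fin (n p g), (W p g - Wbarp p) * u p g i) ^ 2)
        / (∑ p : Fin P, ∑ g : Fin 2, ∑ i : Fin (n p g), (W p g - Wbarp p) ^ 2) ^ 2)
    (hVunitfe : Vunitfe
        = (∑ p : Fin P, ∑ g : Fin 2, ((W p g - Wbarp p) * ∑ i : Fin (n p g), u p g i) ^ 2)
        / (∑ p : Fin P, ∑ g : Fin 2, ∑ i : Fin (n p g), (W p g - Wbarp p) ^ 2) ^ 2)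
    (m ζ : Fin P → ℝ)
    (hm : ∀ p, m p = ((n p 0 : ℝ) / np p) ^ 2 + ((n p 1 : ℝ) / np p) ^ 2)
    (hζ : ∀ p, ζ p = (SETfe p) ^ 2 / ∑ p' : Fin P, (SETfe p') ^ 2) :
    ((1 / 2) * Vpairfe ≤ Vunitfe ∧ Vunitfe ≤ Vpairfe)
    ∧ (∀ p, 1 / 2 ≤ m p ∧ m p ≤ 1)
    ∧ (0 < ∑ p : Fin P, (SETfe p) ^ 2 →
        (∀ p, 0 ≤ ζ p) ∧ (∑ p : Fin P, ζ p = 1)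
        ∧ Vunitfe = (∑ p : Fin P, m p * ζ p) * Vpairfe) :=
  unit_vs_pair_clustered_variance_fe_unbalanced_general P n hn W Y τfe Tp np Wbarp Ybarp hTp hnp
    hWbarp hYbarp u hu SETfe hSETfe Vpairfe Vunitfe hVpairfe hVunitfe m ζ hm hζ
end
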